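/- arXiv:0705.0038 — 6 statements merged into one kernel-verified Lean document; each statement's English description precedes it below -/
import Mathlib

section
/- Every connected finite simple graph with at least two vertices is isomorphic to a box product P₁ □ P₂ □ ⋯ □ P_k of finitely many prime graphs, and this factorization is unique up to reordering and isomorphism of the factors: if the same graph is also isomorphic to a box product Q₁ □ ⋯ □ Q_l of prime graphs, then k = l and there is a permutation σ of {1,…,k} such that P_i is isomorphic to Q_{σ(i)} for every i. -/
open SimpleGraph

/-- The box (Cartesian) product of a finite family of simple graphs: vertices are
tuples, and two tuples are adjacent iff they differ in exactly one coordinate,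
where they are adjacent in the corresponding factor. -/
def boxProdFamily {k : ℕ} {W : Fin k → Type} (P : ∀ i, SimpleGraph (W i)) :
    SimpleGraph (∀ i, W i) where
  Adj u v := ∃ j, (P j).Adj (u j) (v j) ∧ ∀ i, i ≠ j → u i = v i
  symm := ⟨fun u v ⟨j, hadj, h⟩ => ⟨j, hadj.symm, fun i hi => (h i hi).symm⟩⟩
  loopless := ⟨fun u ⟨j, hadj, _⟩ => (P j).loopless.irrefl _ hadj⟩

/-- A finite simple graph is prime with respect to the box product if it is
connected, has at least two vertices, and in any decomposition as a box product
of two graphs, one of the factors is a single vertex. -/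
def SimpleGraph.IsPrime {V : Type} [Fintype V] (G : SimpleGraph V) : Prop :=
  G.Connected ∧ 2 ≤ Fintype.card V ∧
    ∀ (V₁ V₂ : Type) [Fintype V₁] [Fintype V₂]
      (H₁ : SimpleGraph V₁) (H₂ : SimpleGraph V₂),
      Nonempty (G ≃g H₁.boxProd H₂) →
      Fintype.card V₁ = 1 ∨ Fintype.card V₂ = 1

/-!
Existence is induction on the number of vertices: a connected graph that is not prime is a box
product of two connected graphs with fewer vertices.

For uniqueness let `g : □ᵢ Pᵢ ≃g □ⱼ Qⱼ`. The `i`-layer through `x` (vary the `i`-th coordinate of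
`x` only) is geodesically convex and isomorphic to `Pᵢ`, so its image under `g` is a convex copy
of the prime graph `Pᵢ`. A convex set in `G₁ □ G₂` is the product of its two projections, hence
primality forces that image into a single `Qⱼ`-layer. The index `j` does not depend on the
`i`-layer: an edge leaving the layer spans, together with parallel `i`-edges, a square whose image
is a 4-cycle in `□ⱼ Qⱼ`, and opposite edges of such a cycle move the same coordinate. The same
argument for `g⁻¹` makes `i ↦ j` a bijection `σ`, and `g` restricts to isomorphisms
`Pᵢ ≃g Q_{σ i}` between corresponding layers.
-/

open Function Set

theorem mem_range_update_iff {ι : Type} [DecidableEq ι] {W : ι → Type} {x y : ∀ i, W i}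
    {i : ι} : y ∈ range (update x i) ↔ ∀ m ≠ i, y m = x m :=
  ⟨by rintro ⟨a, rfl⟩ m hm; exact update_of_ne hm _ _,
    fun h => ⟨y i, (eq_update_iff.mpr ⟨rfl, h⟩).symm⟩⟩

namespace SimpleGraph

section Convex

variable {V V' α β : Type} {G : SimpleGraph V} {G' : SimpleGraph V'}
  {G₁ : SimpleGraph α} {G₂ : SimpleGraph β}

theorem Hom.edist_map_le (f : G →g G') (u v : V) : G'.edist (f u) (f v) ≤ G.edist u v :=
  le_iInf fun w => (edist_le (w.map f)).trans_eq (by rw [Walk.length_map])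

theorem Iso.edist_map (g : G ≃g G') (u v : V) : G'.edist (g u) (g v) = G.edist u v :=
  (Hom.edist_map_le g.toHom u v).antisymm <| by
    simpa using Hom.edist_map_le g.symm.toHom (g u) (g v)

def IsConvex (G : SimpleGraph V) (S : Set V) : Prop :=
  ∀ ⦃u⦄, u ∈ S → ∀ ⦃v⦄, v ∈ S → ∀ w, G.edist u w + G.edist w v = G.edist u v → w ∈ S

theorem IsConvex.preimage_iso {S : Set V'} (g : G ≃g G') (hS : G'.IsConvex S) :
    G.IsConvex (g ⁻¹' S) := fun _ hu _ hv w hw =>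
  hS hu hv (g w) (by simpa only [Iso.edist_map] using hw)

theorem IsConvex.image_iso {S : Set V} (g : G ≃g G') (hS : G.IsConvex S) :
    G'.IsConvex (g '' S) := by
  rw [show ⇑g '' S = g.symm ⁻¹' S from g.toEquiv.image_eq_preimage_symm S]
  exact hS.preimage_iso g.symm

theorem isConvex_snd_preimage (hG : G₁.Connected) (c : β) :
    (G₁ □ G₂).IsConvex (Prod.snd ⁻¹' {c}) := by
  rintro ⟨u, b⟩ hb ⟨v, b'⟩ hb' ⟨w, c'⟩ h
  simp only [mem_preimage, mem_singleton_iff] at hb hb' ⊢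
  subst b b'
  simp only [edist_boxProd, edist_self, add_zero] at h
  have hfin : G₁.edist u v ≠ ⊤ := edist_ne_top_iff_reachable.mpr (hG u v)
  have htri : G₁.edist u v ≤ G₁.edist u w + G₁.edist w v := G₁.edist_triangle
  -- the `G₁`-parts alone already add up to at least the finite `edist u v`
  have : G₂.edist c c' = 0 := by
    generalize G₁.edist u v = d at *
    generalize G₁.edist u w = a at *
    generalize G₁.edist w v = b at *
    generalize G₂.edist _ c' = e at *
    generalize G₂.edist c' _ = e' at *
    enat_to_nat <;> simp_all
    omega
  exact (edist_eq_zero_iff.mp this).symm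

theorem IsConvex.mk_fst_snd_mem {S : Set (α × β)} (hS : (G₁ □ G₂).IsConvex S) {u v : α × β}
    (hu : u ∈ S) (hv : v ∈ S) : (u.1, v.2) ∈ S :=
  hS hu hv _ (by simp only [edist_boxProd, edist_self, zero_add, add_comm])

theorem IsConvex.eq_prod {S : Set (α × β)} (hS : (G₁ □ G₂).IsConvex S) :
    S = (Prod.fst '' S) ×ˢ (Prod.snd '' S) := by
  refine subset_prod.antisymm ?_
  rintro ⟨a, b⟩ ⟨⟨u, hu, rfl⟩, ⟨v, hv, rfl⟩⟩
  exact hS.mk_fst_snd_mem hu hv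

def induceProdIso (s : Set α) (t : Set β) :
    (G₁ □ G₂).induce (s ×ˢ t) ≃g G₁.induce s □ G₂.induce t where
  toEquiv := Equiv.Set.prod s t
  map_rel_iff' := by
    rintro ⟨⟨a, b⟩, _⟩ ⟨⟨a', b'⟩, _⟩
    change (_ ∧ _ ∨ _ ∧ _) ↔ _
    simp only [Subtype.ext_iff]
    rfl

end Convex

section Prime

variable {V α β : Type} [Fintype V] {H : SimpleGraph V} {G₁ : SimpleGraph α}
  {G₂ : SimpleGraph β}

theorem IsPrime.nontrivial (hH : H.IsPrime) : Nontrivial V :=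
  Fintype.one_lt_card_iff_nontrivial.mp hH.2.1

theorem IsPrime.subsingleton_or_subsingleton (hH : H.IsPrime) [Finite α] [Finite β]
    (e : H ≃g G₁ □ G₂) : Subsingleton α ∨ Subsingleton β := by
  have := Fintype.ofFinite α
  have := Fintype.ofFinite β
  simpa only [← Fintype.card_le_one_iff_subsingleton, Nat.le_one_iff_eq_zero_or_eq_one] using
    (hH.2.2 α β G₁ G₂ ⟨e⟩).imp Or.inr Or.inr

theorem IsPrime.fst_eq_or_snd_eq_of_isConvex (hH : H.IsPrime) (f : H ↪g G₁ □ G₂)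
    (hf : (G₁ □ G₂).IsConvex (range f)) :
    (∀ a b, (f a).1 = (f b).1) ∨ ∀ a b, (f a).2 = (f b).2 := by
  have e : H ≃g G₁.induce (Prod.fst '' range f) □ G₂.induce (Prod.snd '' range f) :=
    f.isoInduceRange.trans <| (Iso.refl.induce (hf.eq_prod ▸ bijOn_id _)).trans (induceProdIso _ _)
  refine (hH.subsingleton_or_subsingleton e).imp (fun h a b => ?_) (fun h a b => ?_) <;>
    exact subsingleton_coe _ |>.mp h (mem_image_of_mem _ (mem_range_self a))
      (mem_image_of_mem _ (mem_range_self b))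

end Prime

section BoxPi

variable {V ι κ : Type} {H : SimpleGraph V} {W : ι → Type} {X : κ → Type}
  {P : ∀ i, SimpleGraph (W i)} {Q : ∀ j, SimpleGraph (X j)}

/-- `boxProdFamily` is the case `ι = Fin k`, and agrees with it definitionally. -/
def boxPi (P : ∀ i, SimpleGraph (W i)) : SimpleGraph (∀ i, W i) where
  Adj u v := ∃ j, (P j).Adj (u j) (v j) ∧ ∀ i, i ≠ j → u i = v i
  symm := ⟨fun _ _ ⟨j, hadj, h⟩ => ⟨j, hadj.symm, fun i hi => (h i hi).symm⟩⟩
  loopless := ⟨fun _ ⟨j, hadj, _⟩ => (P j).loopless.irrefl _ hadj⟩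

theorem boxPi_square_apply_ne {a b c d : ∀ j, X j} (hab : (boxPi Q).Adj a b)
    (hbc : (boxPi Q).Adj b c) (hcd : (boxPi Q).Adj c d) (hda : (boxPi Q).Adj d a) (hac : a ≠ c)
    (hbd : b ≠ d) {j : κ} (h : a j ≠ b j) : d j ≠ c j := by
  obtain ⟨j₁, -, h₁⟩ := hab
  obtain ⟨j₂, -, h₂⟩ := hbc
  obtain ⟨j₃, hc₃, h₃⟩ := hcd
  obtain ⟨j₄, -, h₄⟩ := hda
  obtain rfl : j₁ = j := by_contra fun hne => h (h₁ j (Ne.symm hne))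
  intro hdc
  have hj₃ : j₃ ≠ j₁ := by rintro rfl; exact hc₃.ne hdc.symm
  -- the coordinates moved along `ab` and along `cd` must each be moved back along `bc` or `da`
  have hj : j₂ = j₁ ∨ j₄ = j₁ := by
    by_contra! hne
    exact h ((h₄ j₁ hne.2.symm).symm.trans (hdc.trans (h₂ j₁ hne.1.symm).symm))
  have hj' : j₂ = j₃ ∨ j₄ = j₃ := by
    by_contra! hne
    exact hc₃.ne ((h₂ j₃ hne.1.symm).symm.trans ((h₁ j₃ hj₃).symm.trans (h₄ j₃ hne.2.symm).symm))
  rcases hj with rfl | rfl <;> rcases hj' with rfl | rfl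
  · exact hj₃ rfl
  · exact hac (funext fun m => by by_cases hm : m = j₂ <;> grind)
  · exact hbd (funext fun m => by by_cases hm : m = j₄ <;> grind)
  · exact hj₃ rfl

section update

variable [DecidableEq ι]

theorem boxPi_adj_update_iff {x : ∀ i, W i} {i : ι} {a b : W i} :
    (boxPi P).Adj (update x i a) (update x i b) ↔ (P i).Adj a b := by
  refine ⟨fun ⟨j, hadj, heq⟩ => ?_, fun h => ⟨i, by simpa using h, fun m hm => by simp [hm]⟩⟩
  obtain rfl | hj := eq_or_ne j i
  · simpa using hadj
  · simp [update_of_ne hj] at hadj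

theorem boxPi_adj_update_of_adj {x : ∀ i, W i} {i : ι} {a : W i} (h : (P i).Adj (x i) a) :
    (boxPi P).Adj x (update x i a) := by
  simpa using boxPi_adj_update_iff (x := x) |>.mpr h

theorem boxPi_adj_update_update {x y : ∀ i, W i} (hxy : (boxPi P).Adj x y) {i : ι}
    (hi : x i = y i) (a : W i) : (boxPi P).Adj (update x i a) (update y i a) := by
  obtain ⟨j, hadj, heq⟩ := hxy
  have hj : j ≠ i := by rintro rfl; exact hadj.ne hi
  refine ⟨j, by simpa [update_of_ne hj] using hadj, fun m hm => ?_⟩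
  obtain rfl | hmi := eq_or_ne m i
  · simp
  · simp [update_of_ne hmi, heq m hm]

theorem eq_update_of_boxPi_adj {x y : ∀ i, W i} (hxy : (boxPi P).Adj x y) {i : ι}
    (hi : x i ≠ y i) : y = update x i (y i) := by
  obtain ⟨j, -, heq⟩ := hxy
  obtain rfl : i = j := by_contra fun h => hi (heq i h)
  exact eq_update_iff.mpr ⟨rfl, fun m hm => (heq m hm).symm⟩

def boxPiUpdate (x : ∀ i, W i) (i : ι) : P i ↪g boxPi P where
  toFun := update x i
  inj' := update_injective x i
  map_rel_iff' := boxPi_adj_update_iff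

@[simp]
theorem boxPiUpdate_apply (x : ∀ i, W i) (i : ι) (a : W i) :
    boxPiUpdate (P := P) x i a = update x i a :=
  rfl

def boxPiSplitAt (P : ∀ i, SimpleGraph (W i)) (j : ι) :
    boxPi P ≃g P j □ boxPi fun m : {m // m ≠ j} => P m where
  toEquiv := Equiv.piSplitAt j W
  map_rel_iff' {u v} := by
    change (_ ∧ _ ∨ _ ∧ _) ↔ _
    constructor
    · rintro (⟨hadj, heq⟩ | ⟨⟨m, hadj, heq⟩, heq'⟩)
      · exact ⟨j, hadj, fun i hi => congrFun heq ⟨i, hi⟩⟩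
      · refine ⟨m, hadj, fun i hi => ?_⟩
        obtain rfl | hij := eq_or_ne i j
        · exact heq'
        · exact heq ⟨i, hij⟩ (fun h => hi (congrArg Subtype.val h))
    · rintro ⟨i, hadj, heq⟩
      obtain rfl | hij := eq_or_ne i j
      · exact Or.inl ⟨hadj, funext fun m => heq m m.2⟩
      · exact Or.inr ⟨⟨⟨i, hij⟩, hadj, fun m hm => heq m fun h => hm (Subtype.ext h)⟩,
          heq j hij.symm⟩

theorem isConvex_range_update (x : ∀ i, W i) {i : ι} (hP : (P i).Connected) :
    (boxPi P).IsConvex (range (update x i)) := by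
  have : range (update x i) = boxPiSplitAt P i ⁻¹' (Prod.snd ⁻¹' {(boxPiSplitAt P i x).2}) := by
    ext y
    simp only [mem_range_update_iff, mem_preimage, mem_singleton_iff, funext_iff]
    exact ⟨fun h m => h m m.2, fun h m hm => h ⟨m, hm⟩⟩
  rw [this]
  exact (isConvex_snd_preimage hP _).preimage_iso _

end update

theorem boxPi_preconnected [Finite ι] (hP : ∀ i, (P i).Preconnected) :
    (boxPi P).Preconnected := by
  classical
  intro x y
  have := Fintype.ofFinite ι
  suffices ∀ (s : Finset ι) (x : ∀ i, W i), (∀ m ∉ s, x m = y m) → (boxPi P).Reachable x y from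
    this Finset.univ x (by simp)
  intro s
  induction s using Finset.induction_on with
  | empty =>
    intro x hx
    obtain rfl : x = y := funext fun m => hx m (Finset.notMem_empty m)
    rfl
  | insert i s hi ih =>
    intro x hx
    have hxy : (boxPi P).Reachable x (update x i (y i)) := by
      simpa using ((hP i) (x i) (y i)).map (boxPiUpdate x i).toHom
    refine hxy.trans (ih _ fun m hm => ?_)
    obtain rfl | hmi := eq_or_ne m i
    · simp
    · simp [update_of_ne hmi, hx m (by simp [hm, hmi])]

theorem IsPrime.apply_eq_or_of_isConvex [Fintype V] (hH : H.IsPrime) (f : H ↪g boxPi Q)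
    (hf : (boxPi Q).IsConvex (range f)) (j : κ) :
    (∀ a b, f a j = f b j) ∨ ∀ a b, ∀ m ≠ j, f a m = f b m := by
  classical
  have hf' : (Q j □ boxPi fun m : {m // m ≠ j} => Q m).IsConvex
      (range ((boxPiSplitAt Q j).toEmbedding.comp f)) := by
    rw [RelEmbedding.coe_trans, range_comp]
    exact hf.image_iso _
  exact (hH.fst_eq_or_snd_eq_of_isConvex _ hf').imp id
    fun h a b m hm => congrFun (h a b) ⟨m, hm⟩

end BoxPi

section Uniqueness

variable {ι κ : Type} {W : ι → Type} {X : κ → Type}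
  {P : ∀ i, SimpleGraph (W i)} {Q : ∀ j, SimpleGraph (X j)}

variable [DecidableEq ι] (g : boxPi P ≃g boxPi Q)

/-- `g` maps the `i`-layer through `x` into the `j`-layer through `g x`. -/
def MapsLayer (i : ι) (j : κ) (x : ∀ i, W i) : Prop :=
  ∀ a, ∀ m ≠ j, g (update x i a) m = g x m

variable {g} {i : ι} {j : κ}

theorem MapsLayer.eq_update [DecidableEq κ] {x : ∀ i, W i} (h : MapsLayer g i j x) (a : W i) :
    g (update x i a) = update (g x) j (g (update x i a) j) :=
  eq_update_iff.mpr ⟨rfl, h a⟩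

theorem exists_mapsLayer [Fintype (W i)] (hP : (P i).IsPrime) (x : ∀ i, W i) :
    ∃ j, MapsLayer g i j x := by
  let f := (boxPiUpdate (P := P) x i).trans g.toEmbedding
  have hf : (boxPi Q).IsConvex (range f) := by
    rw [RelEmbedding.coe_trans, range_comp]
    exact (isConvex_range_update x hP.1).image_iso g
  have := hP.nontrivial
  obtain ⟨a, b, hab⟩ := exists_pair_ne (W i)
  obtain ⟨j, hj⟩ := Function.ne_iff.mp (f.injective.ne hab)
  refine ⟨j, fun c m hm => ?_⟩
  have hconst := (hP.apply_eq_or_of_isConvex f hf j).resolve_left fun h => hj (h a b)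
  simpa [f] using hconst c (x i) m hm

theorem MapsLayer.of_adj [Fintype (W i)] (hP : (P i).IsPrime) {x y : ∀ i, W i}
    (h : MapsLayer g i j x) (hxy : (boxPi P).Adj x y) : MapsLayer g i j y := by
  by_cases hi : x i = y i
  -- `x`, `x[i ↦ a]`, `y[i ↦ a]`, `y` is a square, so the image of the `i`-edge at `y` moves `j`
  · obtain ⟨j', hj'⟩ := exists_mapsLayer (g := g) hP y
    have := hP.nontrivial
    obtain ⟨a, ha⟩ := hP.1.preconnected.exists_adj_of_nontrivial (x i)
    have hxz : (boxPi P).Adj x (update x i a) := boxPi_adj_update_of_adj ha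
    have hyw : (boxPi P).Adj y (update y i a) := boxPi_adj_update_of_adj (hi ▸ ha)
    have hgxz : g x j ≠ g (update x i a) j := by
      intro he
      have : update x i a = x := g.injective <| funext fun m => by
        obtain rfl | hm := eq_or_ne m j
        exacts [he.symm, h a m hm]
      exact ha.ne (by simpa using (congrFun this i).symm)
    have hgyw : g y j ≠ g (update y i a) j :=
      boxPi_square_apply_ne (g.map_adj_iff.mpr hxz)
        (g.map_adj_iff.mpr (boxPi_adj_update_update hxy hi a)) (g.map_adj_iff.mpr hyw.symm)
        (g.map_adj_iff.mpr hxy.symm)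
        (g.injective.ne fun he => ha.ne (by simpa using congrFun he i))
        (g.injective.ne fun he => ha.ne (by simpa [hi] using (congrFun he i).symm)) hgxz
    obtain rfl : j = j' := by_contra fun hne => hgyw (hj' a j hne).symm
    exact hj'
  · intro a m hm
    rw [eq_update_of_boxPi_adj hxy hi, update_idem, h a m hm, h _ m hm]

theorem MapsLayer.of_reachable [Fintype (W i)] (hP : (P i).IsPrime) {x y : ∀ i, W i}
    (h : MapsLayer g i j x) (hxy : (boxPi P).Reachable x y) : MapsLayer g i j y := by
  obtain ⟨p⟩ := hxy
  induction p with
  | nil => exact h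
  | cons hadj _ ih => exact ih (h.of_adj hP hadj)

variable (g) in
theorem exists_forall_mapsLayer [Finite ι] [∀ i, Fintype (W i)] (hP : ∀ i, (P i).IsPrime)
    (i : ι) : ∃ j, ∀ x, MapsLayer g i j x := by
  obtain ⟨x₀⟩ : Nonempty (∀ i, W i) := ⟨fun i => (hP i).1.nonempty.some⟩
  obtain ⟨j, hj⟩ := exists_mapsLayer (g := g) (hP i) x₀
  have hconn := boxPi_preconnected fun i => (hP i).1.preconnected
  exact ⟨j, fun x => hj.of_reachable (hP i) (hconn x₀ x)⟩

theorem MapsLayer.eq_of_symm [DecidableEq κ] [Nontrivial (W i)] {i' : ι} {x : ∀ i, W i}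
    (h : MapsLayer g i j x) (h' : MapsLayer g.symm j i' (g x)) : i' = i := by
  by_contra hne
  obtain ⟨a, ha⟩ := exists_ne (x i)
  have := h' (g (update x i a) j) i (Ne.symm hne)
  rw [← h.eq_update, RelIso.symm_apply_apply, RelIso.symm_apply_apply, update_self] at this
  exact ha this

def MapsLayer.iso [DecidableEq κ] {x : ∀ i, W i} (h : MapsLayer g i j x)
    (h' : MapsLayer g.symm j i (g x)) : P i ≃g Q j where
  toFun a := g (update x i a) j
  invFun c := g.symm (update (g x) j c) i
  left_inv a := by
    simp only
    rw [← h.eq_update, RelIso.symm_apply_apply, update_self]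
  right_inv c := by
    have hc := h'.eq_update c
    rw [RelIso.symm_apply_apply] at hc
    simp only
    rw [← hc, RelIso.apply_symm_apply, update_self]
  map_rel_iff' {a b} := by
    change (Q j).Adj (g (update x i a) j) (g (update x i b) j) ↔ _
    rw [← boxPi_adj_update_iff (x := g x), ← h.eq_update, ← h.eq_update, g.map_adj_iff,
      boxPi_adj_update_iff]

theorem exists_equiv_nonempty_iso_of_boxPi_iso [Finite ι] [Finite κ] [∀ i, Fintype (W i)]
    [∀ j, Fintype (X j)] (hP : ∀ i, (P i).IsPrime) (hQ : ∀ j, (Q j).IsPrime)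
    (g : boxPi P ≃g boxPi Q) : ∃ σ : ι ≃ κ, ∀ i, Nonempty (P i ≃g Q (σ i)) := by
  classical
  choose σ hσ using exists_forall_mapsLayer g hP
  choose τ hτ using exists_forall_mapsLayer g.symm hQ
  obtain ⟨x⟩ : Nonempty (∀ i, W i) := ⟨fun i => (hP i).1.nonempty.some⟩
  have hτσ i : τ (σ i) = i := have := (hP i).nontrivial; (hσ i x).eq_of_symm (hτ (σ i) (g x))
  have hστ j : σ (τ j) = j :=
    have := (hQ j).nontrivial; (hτ j (g x)).eq_of_symm (hσ (τ j) (g.symm (g x)))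
  refine ⟨⟨σ, τ, hτσ, hστ⟩, fun i => ?_⟩
  have hτ' := hτ (σ i) (g x)
  rw [hτσ] at hτ'
  exact ⟨(hσ i x).iso hτ'⟩

end Uniqueness

section Existence

variable {V V₁ V₂ V₁' V₂' ι κ : Type} {G : SimpleGraph V} {H₁ : SimpleGraph V₁}
  {H₂ : SimpleGraph V₂} {H₁' : SimpleGraph V₁'} {H₂' : SimpleGraph V₂'} {W : ι → Type}

def Iso.boxProdCongr (e₁ : H₁ ≃g H₁') (e₂ : H₂ ≃g H₂') : (H₁ □ H₂) ≃g (H₁' □ H₂') where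
  toEquiv := e₁.toEquiv.prodCongr e₂.toEquiv
  map_rel_iff' {a b} := by
    change (H₁' □ H₂').Adj (e₁ a.1, e₂ a.2) (e₁ b.1, e₂ b.2) ↔ _
    simp only [boxProd_adj, e₁.map_adj_iff, e₂.map_adj_iff, e₁.apply_eq_iff_eq,
      e₂.apply_eq_iff_eq]

def boxPiUnitIso (G : SimpleGraph V) : boxPi (fun _ : Unit => G) ≃g G where
  toEquiv := Equiv.funUnique Unit V
  map_rel_iff' := ⟨fun h => ⟨(), h, fun _ h' => absurd rfl h'⟩, fun ⟨_, h, _⟩ => h⟩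

def boxPiSumIso {W : ι ⊕ κ → Type} (P : ∀ i, SimpleGraph (W i)) :
    boxPi P ≃g boxPi (fun a => P (.inl a)) □ boxPi (fun b => P (.inr b)) where
  toEquiv := Equiv.sumPiEquivProdPi W
  map_rel_iff' {u v} := by
    change (_ ∧ _ ∨ _ ∧ _) ↔ _
    simp only [funext_iff]
    constructor
    · rintro (⟨⟨a, hadj, heq⟩, heq'⟩ | ⟨⟨b, hadj, heq⟩, heq'⟩)
      · refine ⟨.inl a, hadj, Sum.forall.mpr ⟨fun a' h => heq a' (h ∘ congrArg _), fun b' _ => ?_⟩⟩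
        exact heq' b'
      · refine ⟨.inr b, hadj, Sum.forall.mpr ⟨fun a' _ => heq' a', fun b' h => ?_⟩⟩
        exact heq b' (h ∘ congrArg _)
    · rintro ⟨a | b, hadj, heq⟩
      · refine .inl ⟨⟨a, hadj, fun a' h => heq _ (h <| Sum.inl_injective ·)⟩, fun b => ?_⟩
        exact heq _ Sum.inr_ne_inl
      · refine .inr ⟨⟨b, hadj, fun b' h => heq _ (h <| Sum.inr_injective ·)⟩, fun a => ?_⟩
        exact heq _ Sum.inl_ne_inr

def boxPiCongrLeft (P : ∀ i, SimpleGraph (W i)) (e : ι ≃ κ) :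
    boxPi P ≃g boxPi (fun b => P (e.symm b)) where
  toEquiv := Equiv.piCongrLeft' W e
  map_rel_iff' {u v} := by
    change (∃ j, _ ∧ _) ↔ _
    constructor
    · rintro ⟨j, hadj, heq⟩
      refine ⟨e.symm j, hadj, fun i hi => ?_⟩
      obtain ⟨i, rfl⟩ := e.symm.surjective i
      exact heq i (ne_of_apply_ne _ hi)
    · rintro ⟨i, hadj, heq⟩
      obtain ⟨j, rfl⟩ := e.symm.surjective i
      exact ⟨j, hadj, fun m hm => heq _ (e.symm.injective.ne hm)⟩

theorem connected_and_card_lt_of_iso_boxProd [Fintype V] [Fintype V₁] [Fintype V₂]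
    (hG : G.Connected) (e : G ≃g H₁ □ H₂) (h₁ : Fintype.card V₁ ≠ 1) (h₂ : Fintype.card V₂ ≠ 1) :
    H₁.Connected ∧ 2 ≤ Fintype.card V₁ ∧ Fintype.card V₁ < Fintype.card V := by
  obtain ⟨hH₁, hH₂⟩ := connected_boxProd.mp (e.connected_iff.mp hG)
  have hcard : Fintype.card V = Fintype.card V₁ * Fintype.card V₂ := by
    rw [Fintype.card_congr e.toEquiv, Fintype.card_prod]
  have hpos₁ := Fintype.card_pos_iff.mpr hH₁.nonempty
  have hpos₂ := Fintype.card_pos_iff.mpr hH₂.nonempty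
  refine ⟨hH₁, by omega, ?_⟩
  rw [hcard]
  exact lt_mul_of_one_lt_right (by omega) (by omega)

theorem exists_isPrime_boxPi_iso [Fintype V] (hG : G.Connected) (hV : 2 ≤ Fintype.card V) :
    ∃ (ι : Type) (_ : Fintype ι) (W : ι → Type) (_ : ∀ i, Fintype (W i))
      (P : ∀ i, SimpleGraph (W i)), (∀ i, (P i).IsPrime) ∧ Nonempty (G ≃g boxPi P) := by
  induction hn : Fintype.card V using Nat.strong_induction_on generalizing V with
  | _ n ih =>
    by_cases hGp : G.IsPrime
    · exact ⟨Unit, inferInstance, fun _ => V, fun _ => inferInstance, fun _ => G, fun _ => hGp,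
        ⟨(boxPiUnitIso G).symm⟩⟩
    simp only [IsPrime, hG, hV, true_and, not_forall, not_or] at hGp
    obtain ⟨V₁, V₂, _, _, H₁, H₂, ⟨e⟩, h₁, h₂⟩ := hGp
    obtain ⟨hH₁, hV₁, hlt₁⟩ := connected_and_card_lt_of_iso_boxProd hG e h₁ h₂
    obtain ⟨hH₂, hV₂, hlt₂⟩ :=
      connected_and_card_lt_of_iso_boxProd hG (e.trans (boxProdComm _ _)) h₂ h₁
    obtain ⟨ι₁, _, W₁, iW₁, P₁, hP₁, ⟨e₁⟩⟩ := ih _ (hn ▸ hlt₁) hH₁ hV₁ rfl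
    obtain ⟨ι₂, _, W₂, iW₂, P₂, hP₂, ⟨e₂⟩⟩ := ih _ (hn ▸ hlt₂) hH₂ hV₂ rfl
    let iW : ∀ i, Fintype (Sum.elim W₁ W₂ i) := Sum.rec iW₁ iW₂
    let P : ∀ i, SimpleGraph (Sum.elim W₁ W₂ i) := Sum.rec P₁ P₂
    exact ⟨ι₁ ⊕ ι₂, inferInstance, Sum.elim W₁ W₂, iW, P, Sum.forall.mpr ⟨hP₁, hP₂⟩,
      ⟨e.trans ((e₁.boxProdCongr e₂).trans (boxPiSumIso P).symm)⟩⟩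

end Existence

end SimpleGraph

/-- **Unique factorization of connected graphs into prime graphs** (Sabidussi).
Every connected finite simple graph with at least two vertices is isomorphic to
a box product of finitely many prime graphs, and this factorization is unique
up to reordering and isomorphism of the factors. -/
theorem prime_factorization_exists_unique
    {V : Type} [Fintype V] (G : SimpleGraph V) (hG : G.Connected)
    (hV : 2 ≤ Fintype.card V) :
    (∃ (k : ℕ) (W : Fin k → Type) (_ : ∀ i, Fintype (W i))
        (P : ∀ i, SimpleGraph (W i)),
        (∀ i, (P i).IsPrime) ∧ Nonempty (G ≃g boxProdFamily P)) ∧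
    (∀ (k l : ℕ) (W : Fin k → Type) (_ : ∀ i, Fintype (W i))
        (P : ∀ i, SimpleGraph (W i))
        (X : Fin l → Type) (_ : ∀ j, Fintype (X j))
        (Q : ∀ j, SimpleGraph (X j)),
        (∀ i, (P i).IsPrime) → (∀ j, (Q j).IsPrime) →
        Nonempty (G ≃g boxProdFamily P) → Nonempty (G ≃g boxProdFamily Q) →
        k = l ∧ ∃ σ : Fin k ≃ Fin l, ∀ i, Nonempty (P i ≃g Q (σ i))) := by
  refine ⟨?_, fun k l W _ P X _ Q hP hQ ⟨eP⟩ ⟨eQ⟩ => ?_⟩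
  · obtain ⟨ι, _, W, _, P, hP, ⟨e⟩⟩ := exists_isPrime_boxPi_iso hG hV
    let σ := Fintype.equivFin ι
    exact ⟨_, fun b => W (σ.symm b), fun b => inferInstance, fun b => P (σ.symm b),
      fun b => hP _, ⟨e.trans (boxPiCongrLeft P σ)⟩⟩
  · obtain ⟨σ, hσ⟩ := exists_equiv_nonempty_iso_of_boxPi_iso hP hQ (eP.symm.trans eQ)
    exact ⟨by simpa using Fintype.card_congr σ, σ, hσ⟩
end

section
/- For every n ≥ 1, the number of isomorphism classes of connected simple graphs on n vertices equals the number of finite multisets of isomorphism classes of prime graphs for which the product of the numbers of vertices of the members equals n. Equivalently, the map sending a finite multiset {P₁,…,P_k} of isomorphism classes of prime graphs to the isomorphism class of the box product P₁ □ ⋯ □ P_k (the empty multiset maps to the one-vertex graph) is a bijection onto the set of isomorphism classes of nonempty connected finite simple graphs. -/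
open SimpleGraph

/-- The type of isomorphism classes of connected simple graphs on `n` vertices. -/
def ConnectedClasses (n : ℕ) : Type :=
  Quot fun G H : {G : SimpleGraph (Fin n) // G.Connected} => Nonempty (G.1 ≃g H.1)

/-- The type of isomorphism classes of prime graphs on `m` vertices. -/
def PrimeClasses (m : ℕ) : Type :=
  Quot fun G H : {G : SimpleGraph (Fin m) // G.IsPrime} => Nonempty (G.1 ≃g H.1)

/-!
Finite connected graphs up to isomorphism form a commutative monoid under `□`, and the number of
vertices is a multiplicative function into `ℕ` that is `> 1` away from the one-vertex graph. Its
irreducible elements are the prime graphs, and prime factorizations exist by induction on the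
number of vertices. Uniqueness comes from the refinement property: if `A □ B ≅ C □ D`, fix a
vertex `o` and intersect the `A`- and `B`-layers through `o` with the `C`- and `D`-layers; the four
induced graphs `W, X, Y, Z` satisfy `A ≅ W □ X`, `B ≅ Y □ Z`, `C ≅ W □ Y`, `D ≅ X □ Z`. The
geometric input is that the image of a layer of `A □ B` in `C □ D` is connected and contains the
fourth corner of any square with three corners in it, which forces it to be a box `S₁ × S₂`. In a
refinement monoid with trivial units an irreducible factor of a product of irreducibles is one of
them, which gives uniqueness by induction.
-/

open Relation

namespace SimpleGraph

variable {V α β γ δ : Type*}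

def Iso.boxProd {G₁ : SimpleGraph α} {G₂ : SimpleGraph β} {H₁ : SimpleGraph γ}
    {H₂ : SimpleGraph δ} (e₁ : G₁ ≃g G₂) (e₂ : H₁ ≃g H₂) : (G₁ □ H₁) ≃g G₂ □ H₂ where
  toEquiv := e₁.toEquiv.prodCongr e₂.toEquiv
  map_rel_iff' := by
    simp only [Equiv.prodCongr_apply, boxProd_adj, Prod.map_fst, Prod.map_snd]
    exact or_congr (and_congr e₁.map_adj_iff e₂.injective.eq_iff)
      (and_congr e₂.map_adj_iff e₁.injective.eq_iff)

def boxProdUnitIso (G : SimpleGraph α) : (G □ (⊥ : SimpleGraph Unit)) ≃g G where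
  toEquiv := Equiv.prodPUnit α
  map_rel_iff' := by simp [boxProd_adj]

variable {P : SimpleGraph α} {Q : SimpleGraph β} {C : SimpleGraph γ} {D : SimpleGraph δ}

def boxProdLeftLayerIso (q : β) : (P □ Q).induce {x | x.2 = q} ≃g P where
  toFun x := x.1.1
  invFun p := ⟨(p, q), rfl⟩
  left_inv x := Subtype.ext (Prod.ext rfl x.2.symm)
  right_inv _ := rfl
  map_rel_iff' {x y} := by
    have hx : x.1.2 = q := x.2
    have hy : y.1.2 = q := y.2
    simp [boxProd_adj, hx, hy]

theorem snd_eq_of_boxProd_adj_of_adj {x y z : α × β} (hy : (P □ Q).Adj x y)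
    (hz : (P □ Q).Adj x z) (hyz : y ≠ z) (h : y.2 = z.2) : x.2 = y.2 := by
  rcases boxProd_adj.1 hy with ⟨-, hxy⟩ | ⟨-, hxy⟩
  · exact hxy
  rcases boxProd_adj.1 hz with ⟨-, hxz⟩ | ⟨-, hxz⟩
  · exact hxz.trans h.symm
  · exact absurd (Prod.ext (hxy.symm.trans hxz) h) hyz

section Boxes

def IsSquareClosed (C : SimpleGraph γ) (D : SimpleGraph δ) (T : Set (γ × δ)) : Prop :=
  ∀ ⦃c c' d d'⦄, C.Adj c c' → D.Adj d d' → (c, d) ∈ T → (c', d) ∈ T → (c, d') ∈ T →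
    (c', d') ∈ T

def fiberAdj (C : SimpleGraph γ) (T : Set (γ × δ)) (d : δ) (c c' : γ) : Prop :=
  C.Adj c c' ∧ (c, d) ∈ T ∧ (c', d) ∈ T

variable {T : Set (γ × δ)}

theorem mem_of_reflTransGen_fiberAdj {d : δ} {c₁ c₂ : γ}
    (h : ReflTransGen (fiberAdj C T d) c₁ c₂) (h₂ : (c₂, d) ∈ T) : (c₁, d) ∈ T := by
  rcases h.cases_head with rfl | ⟨_, hc, -⟩
  exacts [h₂, hc.2.1]

theorem IsSquareClosed.reflTransGen_fiberAdj (hT : IsSquareClosed C D T) {d d' : δ}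
    (hd : D.Adj d d') {c₁ c₂ : γ} (h : ReflTransGen (fiberAdj C T d) c₁ c₂)
    (h₂ : (c₂, d') ∈ T) : ReflTransGen (fiberAdj C T d') c₁ c₂ := by
  induction h using ReflTransGen.head_induction_on with
  | refl => exact .refl
  | head hstep _ ih =>
    have hc := mem_of_reflTransGen_fiberAdj ih h₂
    exact .head ⟨hstep.1, hT hstep.1.symm hd hstep.2.2 hstep.2.1 hc, hc⟩ ih

/- Along a walk from `u` to `w` inside `T`, `u.1` and `w.1` stay joined by `C`-edges in the fiber
of `T` over `w.2`: a `D`-step lifts that path to the next fiber, square by square. -/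
theorem IsSquareClosed.mk_mem (hT : IsSquareClosed C D T)
    (hconn : ((C □ D).induce T).Preconnected) {u v : γ × δ} (hu : u ∈ T) (hv : v ∈ T) :
    (u.1, v.2) ∈ T := by
  suffices key : ∀ w : T, ReflTransGen (fiberAdj C T w.1.2) u.1 w.1.1 from
    mem_of_reflTransGen_fiberAdj (key ⟨v, hv⟩) hv
  intro w
  induction (reachable_iff_reflTransGen _ _).1 (hconn ⟨u, hu⟩ w) with
  | refl => exact .refl
  | @tail x y _ hxy ih =>
    have hxy : (C □ D).Adj x y := hxy
    rcases boxProd_adj.1 hxy with ⟨hc, hd⟩ | ⟨hd, hc⟩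
    · rw [← hd]
      exact ih.tail ⟨hc, x.2, hd ▸ y.2⟩
    · rw [← hc]
      exact hT.reflTransGen_fiberAdj hd ih (hc ▸ y.2)

def boxProdInduceIso (hT : ∀ u ∈ T, ∀ v ∈ T, (u.1, v.2) ∈ T) {o : γ × δ} (ho : o ∈ T) :
    (C □ D).induce T ≃g
      (C □ D).induce (T ∩ {x | x.2 = o.2}) □ (C □ D).induce (T ∩ {x | x.1 = o.1}) where
  toFun x := (⟨(x.1.1, o.2), hT _ x.2 _ ho, rfl⟩, ⟨(o.1, x.1.2), hT _ ho _ x.2, rfl⟩)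
  invFun y := ⟨(y.1.1.1, y.2.1.2), hT _ y.1.2.1 _ y.2.2.1⟩
  left_inv x := rfl
  right_inv := by
    rintro ⟨⟨⟨c, d⟩, -, h₁ : d = o.2⟩, ⟨⟨c', d'⟩, -, h₂ : c' = o.1⟩⟩
    subst h₁ h₂
    rfl
  map_rel_iff' := by simp [boxProd_adj, Subtype.ext_iff]

end Boxes

namespace Iso

variable {G : SimpleGraph V}

/-- The copy `P × {(ψ o).2}` of `P` through `o`. -/
def leftLayer (ψ : G ≃g P □ Q) (o : V) : Set V := ψ ⁻¹' {x | x.2 = (ψ o).2}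

def rightLayer (ψ : G ≃g P □ Q) (o : V) : Set V := ψ ⁻¹' {x | x.1 = (ψ o).1}

def leftLayerIso (ψ : G ≃g P □ Q) (o : V) : G.induce (ψ.leftLayer o) ≃g P :=
  (ψ.induce ψ.bijective.bijOn_preimage).trans (boxProdLeftLayerIso _)

theorem isSquareClosed_preimage_leftLayer (ψ : G ≃g P □ Q) (φ : G ≃g C □ D) (o : V) :
    IsSquareClosed C D (φ.symm ⁻¹' ψ.leftLayer o) := by
  intro c c' d d' hc hd _ h₁ h₂
  have adj₁ : (P □ Q).Adj (ψ (φ.symm (c', d'))) (ψ (φ.symm (c', d))) :=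
    ψ.map_adj_iff.2 (φ.symm.map_adj_iff.2 (boxProd_adj_right.2 hd.symm))
  have adj₂ : (P □ Q).Adj (ψ (φ.symm (c', d'))) (ψ (φ.symm (c, d'))) :=
    ψ.map_adj_iff.2 (φ.symm.map_adj_iff.2 (boxProd_adj_left.2 hc.symm))
  have hne : ψ (φ.symm (c', d)) ≠ ψ (φ.symm (c, d')) := fun h =>
    hc.ne' (congrArg Prod.fst (φ.symm.injective (ψ.injective h)))
  exact (snd_eq_of_boxProd_adj_of_adj adj₁ adj₂ hne (h₁.trans h₂.symm)).trans h₁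

theorem nonempty_iso_boxProd_induce_leftLayer (ψ : G ≃g P □ Q) (φ : G ≃g C □ D)
    (hP : P.Connected) (o : V) :
    Nonempty (P ≃g G.induce (ψ.leftLayer o ∩ φ.leftLayer o) □
      G.induce (ψ.leftLayer o ∩ φ.rightLayer o)) := by
  set T := φ.symm ⁻¹' ψ.leftLayer o
  have hbij : ∀ S, Set.BijOn φ (ψ.leftLayer o ∩ φ ⁻¹' S) (T ∩ S) := by
    have hL : φ ⁻¹' T = ψ.leftLayer o := by ext; simp [T]
    intro S
    rw [← hL]
    exact (φ.bijective.bijOn_preimage : Set.BijOn φ (φ ⁻¹' (T ∩ S)) _)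
  have eT : (C □ D).induce T ≃g P :=
    (φ.induce (by simpa using hbij Set.univ)).symm.trans (ψ.leftLayerIso o)
  have hbox : ∀ u ∈ T, ∀ v ∈ T, (u.1, v.2) ∈ T := fun u hu v hv =>
    (isSquareClosed_preimage_leftLayer ψ φ o).mk_mem (eT.connected_iff.2 hP).preconnected hu hv
  have ho : φ o ∈ T := by simp [T, leftLayer]
  exact ⟨eT.symm.trans ((boxProdInduceIso hbox ho).trans
    ((φ.induce (hbij _)).symm.boxProd (φ.induce (hbij _)).symm))⟩

end Iso

end SimpleGraph

class IsRefinementMonoid (M : Type*) [CommMonoid M] : Prop where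
  exists_refinement {x y z w : M} :
    x * y = z * w → ∃ a b c d, x = a * b ∧ y = c * d ∧ z = a * c ∧ w = b * d

section Factorization

variable {M : Type*} [CommMonoid M]

theorem subsingleton_units_of_one_lt (f : M →* ℕ) (hf : ∀ x, x ≠ 1 → 1 < f x) :
    Subsingleton Mˣ := by
  suffices h : ∀ u : Mˣ, u = 1 from ⟨fun u v => (h u).trans (h v).symm⟩
  intro u
  by_contra hu
  have h1 : f u * f ↑u⁻¹ = 1 := by rw [← map_mul, Units.mul_inv, map_one]
  have := hf u (Units.val_eq_one.not.2 hu)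
  rw [Nat.eq_one_of_mul_eq_one_right h1] at this
  exact lt_irrefl _ this

theorem Irreducible.exists_eq_cons_of_mul_eq_prod [IsRefinementMonoid M] [Subsingleton Mˣ]
    {p s : M} (hp : Irreducible p) {N : Multiset M} (hN : ∀ q ∈ N, Irreducible q)
    (h : p * s = N.prod) : ∃ N', N = p ::ₘ N' ∧ s = N'.prod := by
  induction N using Multiset.induction_on generalizing s with
  | empty => exact absurd (IsUnit.of_mul_eq_one s h) hp.not_isUnit
  | cons q N ih =>
    rw [Multiset.prod_cons] at h
    obtain ⟨a, b, c, d, hab, rfl, hac, hbd⟩ := IsRefinementMonoid.exists_refinement h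
    rcases hp.isUnit_or_isUnit hab with ha | hb
    · rw [isUnit_iff_eq_one.1 ha, one_mul] at hab hac
      subst hab hac
      obtain ⟨N', rfl, rfl⟩ := ih (fun r hr => hN r (Multiset.mem_cons_of_mem hr)) hbd.symm
      exact ⟨q ::ₘ N', Multiset.cons_swap _ _ _, by rw [Multiset.prod_cons]⟩
    · obtain rfl := isUnit_iff_eq_one.1 hb
      rw [mul_one] at hab
      rw [one_mul] at hbd
      subst hab hbd
      have hc : c = 1 := isUnit_iff_eq_one.1 <|
        ((hN _ (Multiset.mem_cons_self _ _)).isUnit_or_isUnit hac).resolve_left hp.not_isUnit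
      rw [hac, hc, mul_one, one_mul]
      exact ⟨N, rfl, rfl⟩

theorem Multiset.eq_of_prod_eq_of_irreducible [IsRefinementMonoid M] [Subsingleton Mˣ]
    {P Q : Multiset M} (hP : ∀ p ∈ P, Irreducible p) (hQ : ∀ q ∈ Q, Irreducible q)
    (h : P.prod = Q.prod) : P = Q := by
  induction P using Multiset.induction_on generalizing Q with
  | empty =>
    rcases Q.empty_or_exists_mem with rfl | ⟨q, hq⟩
    · rfl
    · rw [Multiset.prod_zero] at h
      exact absurd (isUnit_of_dvd_one (h ▸ Multiset.dvd_prod hq)) (hQ q hq).not_isUnit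
  | cons p P ih =>
    rw [Multiset.prod_cons] at h
    obtain ⟨Q', rfl, hQ'⟩ :=
      (hP p (Multiset.mem_cons_self _ _)).exists_eq_cons_of_mul_eq_prod hQ h
    rw [ih (fun r hr => hP r (Multiset.mem_cons_of_mem hr))
      (fun r hr => hQ r (Multiset.mem_cons_of_mem hr)) hQ']

theorem exists_multiset_irreducible_prod_eq (f : M →* ℕ) (hf : ∀ x, x ≠ 1 → 1 < f x) (x : M) :
    ∃ P : Multiset M, (∀ p ∈ P, Irreducible p) ∧ P.prod = x := by
  have := subsingleton_units_of_one_lt f hf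
  induction hx : f x using Nat.strong_induction_on generalizing x with
  | _ n ih =>
    by_cases h1 : x = 1
    · exact ⟨0, by simp, by simp [h1]⟩
    by_cases hirr : Irreducible x
    · exact ⟨{x}, by simpa using hirr, Multiset.prod_singleton x⟩
    obtain ⟨a, b, rfl, ha, hb⟩ : ∃ a b, x = a * b ∧ a ≠ 1 ∧ b ≠ 1 := by
      simpa [irreducible_iff, h1, and_assoc] using hirr
    have hfa := hf a ha
    have hfb := hf b hb
    rw [map_mul] at hx
    obtain ⟨P, hP, rfl⟩ := ih (f a) (by rw [← hx]; nlinarith) a rfl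
    obtain ⟨Q, hQ, rfl⟩ := ih (f b) (by rw [← hx]; nlinarith) b rfl
    exact ⟨P + Q, fun p hp => (Multiset.mem_add.1 hp).elim (hP p) (hQ p), Multiset.prod_add P Q⟩

noncomputable def multisetIrreducibleEquiv [IsRefinementMonoid M] (f : M →* ℕ)
    (hf : ∀ x, x ≠ 1 → 1 < f x) : Multiset {p : M // Irreducible p} ≃ M :=
  have := subsingleton_units_of_one_lt f hf
  Equiv.ofBijective (fun P => (P.map Subtype.val).prod)
    ⟨fun P Q h => Multiset.map_injective Subtype.val_injective <|
      Multiset.eq_of_prod_eq_of_irreducible (by simp +contextual) (by simp +contextual) h,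
    fun x => by
      obtain ⟨P, hP, rfl⟩ := exists_multiset_irreducible_prod_eq f hf x
      lift P to Multiset {p : M // Irreducible p} using hP
      exact ⟨P, rfl⟩⟩

end Factorization

def Equiv.multisetCongr {α β : Type*} (e : α ≃ β) : Multiset α ≃ Multiset β where
  toFun := Multiset.map e
  invFun := Multiset.map e.symm
  left_inv s := by simp [Multiset.map_map]
  right_inv s := by simp [Multiset.map_map]

def connectedGraphSetoid : Setoid (Σ n : ℕ, {G : SimpleGraph (Fin n) // G.Connected}) where
  r x y := Nonempty (x.2.1 ≃g y.2.1)
  iseqv := ⟨fun _ => ⟨Iso.refl⟩, fun ⟨e⟩ => ⟨e.symm⟩, fun ⟨e⟩ ⟨f⟩ => ⟨e.trans f⟩⟩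

def ConnectedGraphClass : Type := Quotient connectedGraphSetoid

namespace ConnectedGraphClass

variable {V W : Type} [Fintype V] [Fintype W] {G : SimpleGraph V} {H : SimpleGraph W}
  {hG : G.Connected} {hH : H.Connected}

noncomputable def mk (G : SimpleGraph V) (hG : G.Connected) : ConnectedGraphClass :=
  Quotient.mk _ ⟨_, G.overFin rfl, (G.overFinIso rfl).connected_iff.1 hG⟩

theorem mk_eq_mk_iff : mk G hG = mk H hH ↔ Nonempty (G ≃g H) := by
  refine Quotient.eq.trans ⟨fun ⟨e⟩ => ?_, fun ⟨e⟩ => ?_⟩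
  · exact ⟨((G.overFinIso rfl).trans e).trans (H.overFinIso rfl).symm⟩
  · exact ⟨((G.overFinIso rfl).symm.trans e).trans (H.overFinIso rfl)⟩

theorem exists_eq_mk (x : ConnectedGraphClass) :
    ∃ (n : ℕ) (G : SimpleGraph (Fin n)) (hG : G.Connected), x = mk G hG := by
  induction x using Quotient.inductionOn with
  | h x => exact ⟨x.1, x.2.1, x.2.2, Quotient.sound ⟨x.2.1.overFinIso rfl⟩⟩

noncomputable instance : Mul ConnectedGraphClass where
  mul := Quotient.lift₂ (fun x y => mk (x.2.1 □ y.2.1) (x.2.2.boxProd y.2.2))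
    fun _ _ _ _ ⟨e₁⟩ ⟨e₂⟩ => mk_eq_mk_iff.2 ⟨e₁.boxProd e₂⟩

noncomputable instance : One ConnectedGraphClass :=
  ⟨mk (⊥ : SimpleGraph Unit) (connected_bot_iff.2 ⟨inferInstance, inferInstance⟩)⟩

theorem mk_mul_mk : mk G hG * mk H hH = mk (G □ H) (hG.boxProd hH) :=
  Quotient.sound ⟨(overFinIso _ rfl).symm.trans
    (((G.overFinIso rfl).boxProd (H.overFinIso rfl)).symm.trans (overFinIso _ rfl))⟩

noncomputable instance : CommMonoid ConnectedGraphClass where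
  mul_assoc x y z := by
    obtain ⟨_, G, hG, rfl⟩ := exists_eq_mk x
    obtain ⟨_, H, hH, rfl⟩ := exists_eq_mk y
    obtain ⟨_, K, hK, rfl⟩ := exists_eq_mk z
    simp only [mk_mul_mk]
    exact mk_eq_mk_iff.2 ⟨boxProdAssoc G H K⟩
  one_mul x := by
    obtain ⟨_, G, hG, rfl⟩ := exists_eq_mk x
    exact mk_mul_mk.trans (mk_eq_mk_iff.2 ⟨(boxProdComm _ _).trans (boxProdUnitIso G)⟩)
  mul_one x := by
    obtain ⟨_, G, hG, rfl⟩ := exists_eq_mk x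
    exact mk_mul_mk.trans (mk_eq_mk_iff.2 ⟨boxProdUnitIso G⟩)
  mul_comm x y := by
    obtain ⟨_, G, hG, rfl⟩ := exists_eq_mk x
    obtain ⟨_, H, hH, rfl⟩ := exists_eq_mk y
    rw [mk_mul_mk, mk_mul_mk]
    exact mk_eq_mk_iff.2 ⟨boxProdComm G H⟩

noncomputable def card : ConnectedGraphClass →* ℕ where
  toFun := Quotient.lift (fun x => x.1) fun x y ⟨e⟩ => by
    simpa using Fintype.card_congr e.toEquiv
  map_one' := rfl
  map_mul' x y := by
    induction x, y using Quotient.inductionOn₂ with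
    | h x y => exact (Fintype.card_prod _ _).trans (by simp)

theorem card_mk : card (mk G hG) = Fintype.card V := rfl

theorem mk_eq_one_iff : mk G hG = 1 ↔ Fintype.card V = 1 := by
  refine ⟨fun h => by simpa [card_mk] using congrArg card h, fun h => ?_⟩
  have : Subsingleton V := Fintype.card_le_one_iff_subsingleton.1 h.le
  refine mk_eq_mk_iff.2 ⟨⟨Fintype.equivOfCardEq (by simp [h]), fun {a b} => ?_⟩⟩
  simp [Subsingleton.elim a b]

theorem eq_one_of_card_eq_one {x : ConnectedGraphClass} (h : card x = 1) : x = 1 := by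
  obtain ⟨_, G, hG, rfl⟩ := exists_eq_mk x
  exact mk_eq_one_iff.2 h

theorem one_lt_card {x : ConnectedGraphClass} (hx : x ≠ 1) : 1 < card x := by
  obtain ⟨_, G, hG, rfl⟩ := exists_eq_mk x
  have : 0 < card (mk G hG) := by
    rw [card_mk]
    exact Fintype.card_pos_iff.2 hG.nonempty
  have : card (mk G hG) ≠ 1 := mt eq_one_of_card_eq_one hx
  omega

instance : Subsingleton ConnectedGraphClassˣ :=
  subsingleton_units_of_one_lt card fun _ => one_lt_card

theorem exists_mk_eq_mul_of_iso {V₁ V₂ : Type} [Fintype V₁] [Fintype V₂] {H₁ : SimpleGraph V₁}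
    {H₂ : SimpleGraph V₂} (e : G ≃g H₁ □ H₂) :
    ∃ h₁ h₂, mk G hG = mk H₁ h₁ * mk H₂ h₂ := by
  obtain ⟨h₁, h₂⟩ := connected_boxProd.1 (e.connected_iff.1 hG)
  exact ⟨h₁, h₂, (mk_eq_mk_iff.2 ⟨e⟩).trans mk_mul_mk.symm⟩

theorem irreducible_mk_iff : Irreducible (mk G hG) ↔ G.IsPrime := by
  constructor
  · intro hirr
    refine ⟨hG, ?_, fun V₁ V₂ _ _ H₁ H₂ ⟨e⟩ => ?_⟩
    · have := Fintype.card_pos_iff.2 hG.nonempty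
      have : Fintype.card V ≠ 1 := fun h =>
        hirr.not_isUnit (isUnit_iff_eq_one.2 (mk_eq_one_iff.2 h))
      omega
    · obtain ⟨h₁, h₂, heq⟩ := exists_mk_eq_mul_of_iso (hG := hG) e
      simpa [isUnit_iff_eq_one, mk_eq_one_iff] using hirr.isUnit_or_isUnit heq
  · rintro ⟨-, hcard, hprime⟩
    refine ⟨fun h => ?_, fun a b hab => ?_⟩
    · rw [isUnit_iff_eq_one, mk_eq_one_iff] at h
      omega
    obtain ⟨_, H₁, h₁, rfl⟩ := exists_eq_mk a
    obtain ⟨_, H₂, h₂, rfl⟩ := exists_eq_mk b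
    rw [mk_mul_mk, mk_eq_mk_iff] at hab
    simpa [isUnit_iff_eq_one, mk_eq_one_iff] using hprime _ _ H₁ H₂ hab

instance : IsRefinementMonoid ConnectedGraphClass where
  exists_refinement {x y z w} h := by
    classical
    obtain ⟨_, A, hA, rfl⟩ := exists_eq_mk x
    obtain ⟨_, B, hB, rfl⟩ := exists_eq_mk y
    obtain ⟨_, C, hC, rfl⟩ := exists_eq_mk z
    obtain ⟨_, D, hD, rfl⟩ := exists_eq_mk w
    rw [mk_mul_mk, mk_mul_mk, mk_eq_mk_iff] at h
    obtain ⟨φ⟩ := h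
    obtain ⟨o⟩ := (hA.boxProd hB).nonempty
    let ψ : (A □ B) ≃g A □ B := Iso.refl
    let ψ' := ψ.trans (boxProdComm A B)
    let φ' := φ.trans (boxProdComm C D)
    obtain ⟨eA⟩ := ψ.nonempty_iso_boxProd_induce_leftLayer φ hA o
    obtain ⟨eB⟩ := Iso.nonempty_iso_boxProd_induce_leftLayer ψ' φ hB o
    have hC' := φ.nonempty_iso_boxProd_induce_leftLayer ψ hC o
    have hD' := Iso.nonempty_iso_boxProd_induce_leftLayer φ' ψ hD o
    rw [Set.inter_comm (φ.leftLayer o), Set.inter_comm (φ.leftLayer o)] at hC'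
    rw [Set.inter_comm (Iso.leftLayer φ' o), Set.inter_comm (Iso.leftLayer φ' o)] at hD'
    obtain ⟨eC⟩ := hC'
    obtain ⟨eD⟩ := hD'
    obtain ⟨_, _, hx⟩ := exists_mk_eq_mul_of_iso (hG := hA) eA
    obtain ⟨_, _, hy⟩ := exists_mk_eq_mul_of_iso (hG := hB) eB
    obtain ⟨_, _, hz⟩ := exists_mk_eq_mul_of_iso (hG := hC) eC
    obtain ⟨_, _, hw⟩ := exists_mk_eq_mul_of_iso (hG := hD) eD
    exact ⟨_, _, _, _, hx, hy, hz, hw⟩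

noncomputable def connectedClassesEquiv (n : ℕ) :
    ConnectedClasses n ≃ {x : ConnectedGraphClass // card x = n} :=
  Equiv.ofBijective
    (Quot.lift (fun G => ⟨mk G.1 G.2, Fintype.card_fin n⟩)
      fun G H h => Subtype.ext ((mk_eq_mk_iff (hG := G.2) (hH := H.2)).2 h))
    ⟨fun a b => by
      induction a using Quot.ind with | mk G =>
      induction b using Quot.ind with | mk H =>
      exact fun h => Quot.sound ((mk_eq_mk_iff (hG := G.2) (hH := H.2)).1 (congrArg Subtype.val h)),
    fun ⟨x, hx⟩ => by
      obtain ⟨k, G, hG, rfl⟩ := exists_eq_mk x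
      obtain rfl : k = n := by simpa [card_mk] using hx
      exact ⟨Quot.mk _ ⟨G, hG⟩, rfl⟩⟩

noncomputable def primeClassesEquiv :
    (Σ m, PrimeClasses m) ≃ {p : ConnectedGraphClass // Irreducible p} :=
  Equiv.ofBijective
    (fun s => Quot.lift
      (fun G : {G : SimpleGraph (Fin s.1) // G.IsPrime} => ⟨mk G.1 G.2.1, irreducible_mk_iff.2 G.2⟩)
      (fun G H h => Subtype.ext ((mk_eq_mk_iff (hG := G.2.1) (hH := H.2.1)).2 h)) s.2)
    ⟨by
      rintro ⟨m, a⟩ ⟨m', b⟩ h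
      induction a using Quot.ind with | mk G =>
      induction b using Quot.ind with | mk H =>
      replace h : mk G.1 G.2.1 = mk H.1 H.2.1 := congrArg Subtype.val h
      obtain rfl : m = m' := by simpa [card_mk] using congrArg card h
      exact Sigma.ext rfl (heq_of_eq (Quot.sound (mk_eq_mk_iff.1 h))),
    fun ⟨p, hp⟩ => by
      obtain ⟨k, G, hG, rfl⟩ := exists_eq_mk p
      exact ⟨⟨k, Quot.mk _ ⟨G, irreducible_mk_iff.1 hp⟩⟩, rfl⟩⟩

theorem card_primeClassesEquiv (s : Σ m, PrimeClasses m) :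
    card (primeClassesEquiv s).1 = s.1 := by
  obtain ⟨m, a⟩ := s
  induction a using Quot.ind
  exact Fintype.card_fin m

theorem card_prod_map_primeClassesEquiv (M : Multiset (Σ m, PrimeClasses m)) :
    card ((M.map primeClassesEquiv).map Subtype.val).prod = (M.map Sigma.fst).prod := by
  rw [map_multiset_prod, Multiset.map_map, Multiset.map_map]
  exact congrArg _ (Multiset.map_congr rfl fun s _ => card_primeClassesEquiv s)

end ConnectedGraphClass

theorem card_connected_classes_eq_card_prime_multisets_general (n : ℕ) :
    Nat.card (ConnectedClasses n) =
      Nat.card {M : Multiset (Σ m : ℕ, PrimeClasses m) //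
        (M.map Sigma.fst).prod = n} := by
  let factorization := multisetIrreducibleEquiv ConnectedGraphClass.card
    fun _ => ConnectedGraphClass.one_lt_card
  calc Nat.card (ConnectedClasses n)
      = Nat.card {x : ConnectedGraphClass // x.card = n} :=
        Nat.card_congr (ConnectedGraphClass.connectedClassesEquiv n)
    _ = Nat.card {P // (factorization P).card = n} :=
        Nat.card_congr (factorization.subtypeEquiv fun _ => Iff.rfl).symm
    _ = Nat.card {M : Multiset (Σ m : ℕ, PrimeClasses m) // (M.map Sigma.fst).prod = n} :=
        Nat.card_congr (ConnectedGraphClass.primeClassesEquiv.multisetCongr.subtypeEquiv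
          fun M => by rw [← ConnectedGraphClass.card_prod_map_primeClassesEquiv]; rfl).symm

/-- For every `n ≥ 1`, the number of isomorphism classes of connected simple
graphs on `n` vertices equals the number of finite multisets of isomorphism
classes of prime graphs whose vertex counts multiply to `n`. -/
theorem card_connected_classes_eq_card_prime_multisets (n : ℕ) (hn : 1 ≤ n) :
    Nat.card (ConnectedClasses n) =
      Nat.card {M : Multiset (Σ m : ℕ, PrimeClasses m) //
        (M.map Sigma.fst).prod = n} :=
  card_connected_classes_eq_card_prime_multisets_general n
end

section
/- Let n ≥ 2 be an integer and write n = r^e where e is the largest integer such that n is a perfect e-th power (so r is not a perfect power of a smaller integer). For m ≥ 2 let b_m denote the number of isomorphism classes of prime graphs on m vertices, and define d_m := ∑ b_a / j, the sum over all pairs (a, j) with a ≥ 2, j ≥ 1 and a^j = m. Then b_n = (1/e) · ∑_{l | e} μ(e/l) · l · d_{r^l}, where μ is the Möbius function and the sum is over all positive divisors l of e. -/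
open SimpleGraph ArithmeticFunction

/-- The number of isomorphism classes of prime graphs on `m` vertices. -/
noncomputable def numPrimeClasses (m : ℕ) : ℕ :=
  Nat.card
    (Quot fun G H : {G : SimpleGraph (Fin m) // G.IsPrime} => Nonempty (G.1 ≃g H.1))

/-! The identity is Möbius inversion and has nothing to do with graphs. Since `r` is not a
perfect power, the solutions of `a ^ j = r ^ l` with `j ≥ 1` are exactly `a = r ^ (l / j)` for
`j ∣ l`, so `l · d (r ^ l) = ∑_{k ∣ l} k · b (r ^ k)`; inverting this divisor sum at `l = e`
gives `e · b n`. -/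

def NotPerfectPower (r : ℕ) : Prop :=
  ∀ c k : ℕ, r = c ^ k → k = 1

lemma exists_eq_pow_of_dvd_factorization {m k : ℕ} (hm : m ≠ 0)
    (h : ∀ p, k ∣ m.factorization p) : ∃ c, m = c ^ k := by
  refine ⟨m.factorization.prod fun p t => p ^ (t / k), ?_⟩
  conv_lhs => rw [← Nat.prod_factorization_pow_eq_self hm]
  rw [Finsupp.prod, Finsupp.prod, ← Finset.prod_pow]
  refine Finset.prod_congr rfl fun p _ => ?_
  rw [← pow_mul, Nat.div_mul_cancel (h p)]

lemma exponent_ne_zero_of_forall_exponent_le {n r e : ℕ} (hre : n = r ^ e)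
    (hmax : ∀ e' : ℕ, (∃ r' : ℕ, n = r' ^ e') → e' ≤ e) : e ≠ 0 := by
  rintro rfl
  have := hmax 1 ⟨1, by simpa using hre⟩
  omega

lemma notPerfectPower_of_forall_exponent_le {n r e : ℕ} (hre : n = r ^ e)
    (hmax : ∀ e' : ℕ, (∃ r' : ℕ, n = r' ^ e') → e' ≤ e) : NotPerfectPower r := by
  intro c k hck
  have he := exponent_ne_zero_of_forall_exponent_le hre hmax
  have hk : k * e ≤ 1 * e := by
    simpa using hmax (k * e) ⟨c, by rw [hre, hck, ← pow_mul]⟩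
  have hk0 : k ≠ 0 := by
    rintro rfl
    have := hmax (e + 1) ⟨1, by simp [hre, hck]⟩
    omega
  have := Nat.le_of_mul_le_mul_right hk (Nat.pos_of_ne_zero he)
  omega

namespace NotPerfectPower

variable {r : ℕ} (hr : NotPerfectPower r)
include hr

lemma two_le : 2 ≤ r := by
  by_contra! h
  interval_cases r
  · exact absurd (hr 0 2 rfl) (by norm_num)
  · exact absurd (hr 1 2 rfl) (by norm_num)

lemma dvd_of_pow_eq_pow {a j l : ℕ} (hj : 0 < j) (h : a ^ j = r ^ l) : j ∣ l := by
  set g := j.gcd l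
  have hg : 0 < g := Nat.gcd_pos_of_pos_left l hj
  have hcop : (j / g).Coprime (l / g) := Nat.coprime_div_gcd_div_gcd hg
  have hbase : a ^ (j / g) = r ^ (l / g) := by
    refine Nat.pow_left_injective hg.ne' ?_
    dsimp only
    rw [← pow_mul, ← pow_mul, Nat.div_mul_cancel (Nat.gcd_dvd_left j l),
      Nat.div_mul_cancel (Nat.gcd_dvd_right j l), h]
  have hdvd : ∀ p, j / g ∣ r.factorization p := fun p => by
    have := congrArg (fun m => m.factorization p) hbase
    simp only [Nat.factorization_pow, Finsupp.smul_apply, smul_eq_mul] at this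
    exact hcop.dvd_of_dvd_mul_left ⟨a.factorization p, this.symm⟩
  obtain ⟨c, hc⟩ := exists_eq_pow_of_dvd_factorization (by have := hr.two_le; omega) hdvd
  have hjg : j = g := by
    have := Nat.div_mul_cancel (Nat.gcd_dvd_left j l)
    rw [hr c _ hc, one_mul] at this
    exact this.symm
  exact hjg ▸ Nat.gcd_dvd_right j l

lemma eq_pow_div_of_pow_eq_pow {a j l : ℕ} (hj : 0 < j) (h : a ^ j = r ^ l) :
    a = r ^ (l / j) := by
  refine Nat.pow_left_injective hj.ne' ?_
  simp only [h, ← pow_mul, Nat.div_mul_cancel (hr.dvd_of_pow_eq_pow hj h)]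

lemma finsum_pow_eq_pow_eq_sum_divisors {K : Type*} [DivisionRing K] (b : ℕ → K) {l : ℕ}
    (hl : l ≠ 0) :
    ∑ᶠ q : ℕ × ℕ, (if 2 ≤ q.1 ∧ 1 ≤ q.2 ∧ q.1 ^ q.2 = r ^ l then b q.1 / q.2 else 0) =
      ∑ j ∈ l.divisors, b (r ^ (l / j)) / j := by
  have hsupp : (Function.support fun q : ℕ × ℕ =>
      if 2 ≤ q.1 ∧ 1 ≤ q.2 ∧ q.1 ^ q.2 = r ^ l then b q.1 / q.2 else 0) ⊆
      ↑(l.divisors.image fun j => (r ^ (l / j), j)) := by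
    intro q hq
    simp only [Function.mem_support, ne_eq, ite_eq_right_iff, not_forall] at hq
    obtain ⟨⟨-, hj, h⟩, -⟩ := hq
    simp only [Finset.coe_image, Set.mem_image, Finset.mem_coe, Nat.mem_divisors]
    exact ⟨q.2, ⟨hr.dvd_of_pow_eq_pow hj h, hl⟩, by rw [← hr.eq_pow_div_of_pow_eq_pow hj h]⟩
  rw [finsum_eq_sum_of_support_subset _ hsupp,
    Finset.sum_image fun _ _ _ _ hxy => congrArg Prod.snd hxy]
  refine Finset.sum_congr rfl fun j hj => if_pos ⟨?_, ?_, ?_⟩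
  · exact hr.two_le.trans <| Nat.le_self_pow
      (Nat.div_pos (Nat.divisor_le hj) (Nat.pos_of_mem_divisors hj)).ne' r
  · exact Nat.pos_of_mem_divisors hj
  · rw [← pow_mul, Nat.div_mul_cancel (Nat.dvd_of_mem_divisors hj)]

end NotPerfectPower

lemma natCast_mul_sum_divisors_div {K : Type*} [Field K] [CharZero K] (f : ℕ → K)
    (l : ℕ) : (l : K) * ∑ j ∈ l.divisors, f (l / j) / j = ∑ k ∈ l.divisors, k * f k := by
  rw [Finset.mul_sum, ← Nat.sum_div_divisors l fun k => (k : K) * f k]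
  refine Finset.sum_congr rfl fun j hj => ?_
  have hj0 : (j : K) ≠ 0 := Nat.cast_ne_zero.2 (Nat.pos_of_mem_divisors hj).ne'
  rw [Nat.cast_div (Nat.dvd_of_mem_divisors hj) hj0]
  ring

lemma sum_divisors_moebius_div_mul_eq {R : Type*} [CommRing R] {f g : ℕ → R}
    (h : ∀ n > 0, ∑ i ∈ n.divisors, f i = g n) {n : ℕ} (hn : 0 < n) :
    ∑ l ∈ n.divisors, (moebius (n / l) : R) * g l = f n := by
  rw [← sum_eq_iff_sum_mul_moebius_eq.1 h n hn,
    Nat.sum_divisorsAntidiagonal' fun i j => (moebius i : R) * g j]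

open Classical in
theorem numPrimeClasses_eq_moebius_inversion_general (n r e : ℕ)
    (hre : n = r ^ e)
    (hmax : ∀ e' : ℕ, (∃ r' : ℕ, n = r' ^ e') → e' ≤ e)
    (d : ℕ → ℚ)
    (hd : ∀ m, d m =
      ∑ᶠ q : ℕ × ℕ,
        (if 2 ≤ q.1 ∧ 1 ≤ q.2 ∧ q.1 ^ q.2 = m
          then (numPrimeClasses q.1 : ℚ) / q.2 else 0)) :
    (numPrimeClasses n : ℚ) =
      (1 / (e : ℚ)) * ∑ l ∈ e.divisors, (moebius (e / l) : ℚ) * l * d (r ^ l) := by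
  have he := exponent_ne_zero_of_forall_exponent_le hre hmax
  have hr := notPerfectPower_of_forall_exponent_le hre hmax
  have hsum : ∀ l : ℕ, 0 < l →
      ∑ k ∈ l.divisors, (k : ℚ) * numPrimeClasses (r ^ k) = l * d (r ^ l) := fun l hl => by
    rw [hd, hr.finsum_pow_eq_pow_eq_sum_divisors (fun a => (numPrimeClasses a : ℚ)) hl.ne',
      natCast_mul_sum_divisors_div fun k => (numPrimeClasses (r ^ k) : ℚ)]
  have hinv := sum_divisors_moebius_div_mul_eq hsum (Nat.pos_of_ne_zero he)
  calc (numPrimeClasses n : ℚ) = 1 / e * (e * numPrimeClasses (r ^ e)) := by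
        rw [hre]; field_simp
    _ = _ := by
        rw [← hinv]; simp only [mul_assoc]

open Classical in
/-- Let `n ≥ 2` and write `n = r^e` with `e` the largest integer such that `n` is
a perfect `e`-th power.  With `b_m` the number of unlabeled prime graphs on `m`
vertices and `d_m = ∑_{a^j = m, a ≥ 2, j ≥ 1} b_a / j`, one has
`b_n = (1/e) ∑_{l ∣ e} μ(e/l) · l · d_{r^l}`. -/
theorem numPrimeClasses_eq_moebius_inversion (n r e : ℕ) (hn : 2 ≤ n)
    (hre : n = r ^ e)
    (hmax : ∀ e' : ℕ, (∃ r' : ℕ, n = r' ^ e') → e' ≤ e)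
    (d : ℕ → ℚ)
    (hd : ∀ m, d m =
      ∑ᶠ q : ℕ × ℕ,
        (if 2 ≤ q.1 ∧ 1 ≤ q.2 ∧ q.1 ^ q.2 = m
          then (numPrimeClasses q.1 : ℚ) / q.2 else 0)) :
    (numPrimeClasses n : ℚ) =
      (1 / (e : ℚ)) * ∑ l ∈ e.divisors, (moebius (e / l) : ℚ) * l * d (r ^ l) :=
  numPrimeClasses_eq_moebius_inversion_general n r e hre hmax d hd
end

section
/- Let k ≥ 1 and let a₁, …, a_k be positive integers with product n = a₁ a₂ ⋯ a_k, and let U be a finite set with |U| = n. Then the number of k-rectangles (π₁, …, π_k) on U such that π_i has exactly a_i blocks for each i equals the multinomial coefficient n! / (a₁! a₂! ⋯ a_k!). -/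
/-!
A bijection `e : U ≃ ∀ i, Fin (a i)` yields a `k`-rectangle whose `i`-th partition consists of
the fibres of the `i`-th coordinate of `e`: a choice of one block per coordinate meets in the
single point `e.symm` of the chosen labels. Conversely, labelling the blocks of each partition of a
`k`-rectangle gives an injection `U → ∀ i, Fin (a i)`, hence a bijection, inducing it. Two
bijections induce the same rectangle exactly when they differ by relabelling each coordinate,
i.e. by an element of `∀ i, Equiv.Perm (Fin (a i))`, which acts freely. So
`n! = #rectangles * ∏ i, (a i)!`.
-/

/-- A `k`-rectangle on a finite set `U` with respect to block counts
`a : Fin k → ℕ`: a `k`-tuple of partitions of `U` such that the `i`-th partition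
has `a i` blocks, each of size `|U| / a i`, and every choice of one block from
each partition intersects in exactly one element. -/
def IsKRectangle {U : Type} [Fintype U] [DecidableEq U] {k : ℕ} (a : Fin k → ℕ)
    (π : Fin k → Finpartition (Finset.univ : Finset U)) : Prop :=
  (∀ i, (π i).parts.card = a i) ∧
  (∀ i, ∀ B ∈ (π i).parts, B.card = Fintype.card U / a i) ∧
  (∀ B : Fin k → Finset U, (∀ i, B i ∈ (π i).parts) →
    (Finset.univ.inf B).card = 1)

open Finset Function

theorem Nat.card_eq_card_mul_of_fiber_equiv {X Y G : Type*} (Φ : X → Y)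
    (h : ∀ y, Nonempty ({x // Φ x = y} ≃ G)) : Nat.card X = Nat.card Y * Nat.card G := by
  rw [← Nat.card_prod]
  exact Nat.card_congr <| (Equiv.sigmaFiberEquiv Φ).symm.trans <|
    (Equiv.sigmaCongrRight fun y => (h y).some).trans (Equiv.sigmaEquivProd Y G)

theorem exists_perm_comp_eq_of_ker_eq {α β : Type*} {f g : α → β} (hf : Surjective f)
    (hg : Surjective g) (hfg : Setoid.ker f = Setoid.ker g) :
    ∃ σ : Equiv.Perm β, g = σ ∘ f := by
  have h : ∀ x y, f x = f y ↔ g x = g y := Setoid.ext_iff.1 hfg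
  have hσf : ∀ x, g (surjInv hf (f x)) = g x := fun x => (h _ _).1 (surjInv_eq hf (f x))
  refine ⟨Equiv.ofBijective (g ∘ surjInv hf) ⟨fun b b' hbb' => ?_, fun c => ?_⟩,
    funext fun x => (hσf x).symm⟩
  · simpa only [surjInv_eq] using (h _ _).2 hbb'
  · obtain ⟨x, rfl⟩ := hg c
    exact ⟨f x, hσf x⟩

namespace Finpartition

variable {α : Type*} [DecidableEq α]

theorem parts_eq_image_part {s : Finset α} (P : Finpartition s) : P.parts = s.image P.part := by
  ext B
  refine ⟨fun hB => ?_, ?_⟩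
  · obtain ⟨x, hx⟩ := P.nonempty_of_mem_parts hB
    exact mem_image.2 ⟨x, P.le hB hx, P.part_eq_of_mem hB hx⟩
  · rw [mem_image]
    rintro ⟨x, hx, rfl⟩
    exact P.part_mem.2 hx

theorem ext_part {s : Finset α} {P Q : Finpartition s} (h : ∀ x, P.part x = Q.part x) :
    P = Q :=
  Finpartition.ext <| by rw [parts_eq_image_part, parts_eq_image_part, funext h]

variable [Fintype α] {β : Type*}

open Classical in
noncomputable def ofFiber (f : α → β) : Finpartition (univ : Finset α) :=
  ofSetoid (Setoid.ker f)

theorem mem_part_ofFiber {f : α → β} {x y : α} : y ∈ (ofFiber f).part x ↔ f y = f x := by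
  classical
  rw [ofFiber, mem_part_ofSetoid_iff_rel, Setoid.ker_def, eq_comm]

theorem part_ofFiber [DecidableEq β] (f : α → β) (x : α) :
    (ofFiber f).part x = ({y | f y = f x} : Finset α) := by
  ext y
  rw [mem_part_ofFiber, mem_filter, and_iff_right (mem_univ y)]

theorem ofFiber_eq_ofFiber_iff {γ : Type*} {f : α → β} {g : α → γ} :
    ofFiber f = ofFiber g ↔ Setoid.ker f = Setoid.ker g := by
  refine ⟨fun h => Setoid.ext fun x y => ?_, fun h => ext_part fun x => ?_⟩
  · rw [Setoid.ker_def, Setoid.ker_def, eq_comm, ← mem_part_ofFiber, h, mem_part_ofFiber,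
      eq_comm]
  · ext y
    rw [mem_part_ofFiber, mem_part_ofFiber]
    exact Setoid.ext_iff.1 h y x

theorem ofFiber_comp {γ : Type*} {σ : β → γ} (hσ : Injective σ) (f : α → β) :
    ofFiber (σ ∘ f) = ofFiber f :=
  ofFiber_eq_ofFiber_iff.2 <| Setoid.ext fun _ _ => hσ.eq_iff

theorem ofFiber_part (P : Finpartition (univ : Finset α)) : ofFiber P.part = P :=
  ext_part fun x => by
    ext y
    rw [mem_part_ofFiber, P.mem_part_iff_part_eq_part (mem_univ y) (mem_univ x)]

theorem card_parts_ofFiber [Fintype β] {f : α → β} (hf : Surjective f) :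
    #(ofFiber f).parts = Fintype.card β := by
  classical
  have hfiber : Injective fun b : β => ({y | f y = b} : Finset α) := fun b b' h => by
    obtain ⟨x, rfl⟩ := hf b
    have hx : x ∈ ({y | f y = b'} : Finset α) := by
      beta_reduce at h
      rw [← h]
      exact mem_filter.2 ⟨mem_univ x, rfl⟩
    exact (mem_filter.1 hx).2
  have hpart : (ofFiber f).part = (fun b : β => ({y | f y = b} : Finset α)) ∘ f :=
    funext (part_ofFiber f)
  rw [parts_eq_image_part, hpart, ← image_image, image_univ_of_surjective hf,
    card_image_of_injective _ hfiber, card_univ]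

end Finpartition

open Finpartition

section CoordPartitions

variable {U ι : Type*} {β : ι → Type*}

theorem trans_piCongrRight_injective [∀ i, Nonempty (β i)] (e : U ≃ ∀ i, β i) :
    Injective fun g : ∀ i, Equiv.Perm (β i) => e.trans (Equiv.piCongrRight g) := by
  intro g g' h
  funext i
  ext b
  obtain ⟨x, rfl⟩ := ((surjective_eval i).comp e.surjective) b
  exact congrFun (DFunLike.congr_fun h x) i

variable [Fintype U] [DecidableEq U]

noncomputable def coordPartitions (e : U ≃ ∀ i, β i) (i : ι) :
    Finpartition (univ : Finset U) :=
  ofFiber fun x => e x i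

theorem coordPartitions_trans_piCongrRight (e : U ≃ ∀ i, β i) (g : ∀ i, Equiv.Perm (β i)) :
    coordPartitions (e.trans (Equiv.piCongrRight g)) = coordPartitions e :=
  funext fun i => ofFiber_comp (g i).injective fun x => e x i

theorem card_part_coordPartitions [Fintype ι] [DecidableEq ι] [∀ i, Fintype (β i)]
    [∀ i, DecidableEq (β i)] (e : U ≃ ∀ i, β i) (i : ι) (x : U) :
    #((coordPartitions e i).part x) = ∏ j ∈ univ.erase i, Fintype.card (β j) := by
  calc #((coordPartitions e i).part x)
      = #{v ∈ Fintype.piFinset fun j => (univ : Finset (β j)) | v i = e x i} :=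
        card_equiv e fun y => by
          simp only [coordPartitions, part_ofFiber, mem_filter, mem_univ, true_and,
            Fintype.mem_piFinset, implies_true]
    _ = ∏ j ∈ univ.erase i, Fintype.card (β j) :=
        Fintype.card_filter_piFinset_eq_of_mem _ i (mem_univ _)

theorem inf_part_coordPartitions [Fintype ι] (e : U ≃ ∀ i, β i) (x : ι → U) :
    univ.inf (fun i => (coordPartitions e i).part (x i)) = {e.symm fun i => e (x i) i} := by
  ext y
  simp only [mem_inf, mem_univ, true_implies, coordPartitions, mem_part_ofFiber, mem_singleton,
    Equiv.eq_symm_apply, funext_iff]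

variable [∀ i, Nonempty (β i)]

theorem exists_eq_trans_piCongrRight {e e' : U ≃ ∀ i, β i}
    (h : coordPartitions e = coordPartitions e') :
    ∃ g : ∀ i, Equiv.Perm (β i), e' = e.trans (Equiv.piCongrRight g) := by
  have hcoord : ∀ i, ∃ σ : Equiv.Perm (β i), (fun x => e' x i) = σ ∘ fun x => e x i :=
    fun i => exists_perm_comp_eq_of_ker_eq ((surjective_eval i).comp e.surjective)
      ((surjective_eval i).comp e'.surjective)
      (ofFiber_eq_ofFiber_iff.1 (congrFun h i))
  choose g hg using hcoord
  exact ⟨g, Equiv.ext fun x => funext fun i => congrFun (hg i) x⟩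

theorem nonempty_coordPartitions_fiber_equiv (e₀ : U ≃ ∀ i, β i) :
    Nonempty ({e : U ≃ ∀ i, β i // coordPartitions e = coordPartitions e₀} ≃
      ∀ i, Equiv.Perm (β i)) := by
  refine ⟨(Equiv.ofBijective
    (fun g => ⟨e₀.trans (Equiv.piCongrRight g), coordPartitions_trans_piCongrRight e₀ g⟩)
    ⟨fun g g' h => ?_, fun ⟨e, he⟩ => ?_⟩).symm⟩
  · exact trans_piCongrRight_injective e₀ (congrArg Subtype.val h)
  · obtain ⟨g, rfl⟩ := exists_eq_trans_piCongrRight he.symm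
    exact ⟨g, rfl⟩

end CoordPartitions

section Rectangles

variable {U : Type} [Fintype U] [DecidableEq U] {k : ℕ} {a : Fin k → ℕ}

theorem isKRectangle_coordPartitions (ha : ∀ i, 0 < a i) (e : U ≃ ∀ i, Fin (a i)) :
    IsKRectangle a (coordPartitions e) := by
  have : ∀ i, Nonempty (Fin (a i)) := fun i => ⟨⟨0, ha i⟩⟩
  refine ⟨fun i => ?_, fun i B hB => ?_, fun B hB => ?_⟩
  · rw [coordPartitions,
      card_parts_ofFiber (f := fun x => e x i) ((surjective_eval i).comp e.surjective),
      Fintype.card_fin]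
  · rw [parts_eq_image_part, mem_image] at hB
    obtain ⟨x, -, rfl⟩ := hB
    have hcard : Fintype.card U = a i * ∏ j ∈ univ.erase i, a j := by
      rw [Fintype.card_congr e, Fintype.card_pi, mul_prod_erase _ _ (mem_univ i)]
      simp only [Fintype.card_fin]
    rw [card_part_coordPartitions, hcard, Nat.mul_div_cancel_left _ (ha i)]
    simp only [Fintype.card_fin]
  · simp only [parts_eq_image_part, mem_image] at hB
    choose x hx using hB
    rw [← funext fun i => (hx i).2, inf_part_coordPartitions, card_singleton]

theorem exists_equiv_coordPartitions_eq (hU : Fintype.card U = ∏ i, a i)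
    {π : Fin k → Finpartition (univ : Finset U)} (hπ : IsKRectangle a π) :
    ∃ e : U ≃ ∀ i, Fin (a i), coordPartitions e = π := by
  have σ : ∀ i, (π i).parts ≃ Fin (a i) := fun i =>
    Fintype.equivFinOfCardEq ((Fintype.card_coe _).trans (hπ.1 i))
  let f : U → ∀ i, Fin (a i) := fun x i =>
    σ i ⟨(π i).part x, (π i).part_mem.2 (mem_univ x)⟩
  have hf : Injective f := by
    intro x y hxy
    have hpart : ∀ i, (π i).part y = (π i).part x := fun i =>
      congrArg Subtype.val ((σ i).injective (congrFun hxy i)).symm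
    refine card_le_one.1 (hπ.2.2 _ fun i => (π i).part_mem.2 (mem_univ x)).le x ?_ y ?_ <;>
      refine mem_inf.2 fun i _ => ?_
    · exact (π i).mem_part (mem_univ x)
    · exact hpart i ▸ (π i).mem_part (mem_univ y)
  have hbij : Bijective f := (Fintype.bijective_iff_injective_and_card f).2
    ⟨hf, by simp only [hU, Fintype.card_pi, Fintype.card_fin]⟩
  refine ⟨Equiv.ofBijective f hbij, funext fun i => ?_⟩
  calc ofFiber (fun x => f x i)
      = ofFiber (Subtype.val ∘ (σ i).symm ∘ fun x => f x i) :=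
        (ofFiber_comp (Subtype.val_injective.comp (σ i).symm.injective) _).symm
    _ = ofFiber (π i).part := by simp only [comp_def, f, Equiv.symm_apply_apply]
    _ = π i := ofFiber_part (π i)

end Rectangles

theorem card_kRectangles_general {U : Type} [Fintype U] [DecidableEq U] (k : ℕ)
    (a : Fin k → ℕ) (ha : ∀ i, 0 < a i)
    (hU : Fintype.card U = ∏ i, a i) :
    Nat.card {π : Fin k → Finpartition (Finset.univ : Finset U) //
        IsKRectangle a π} =
      (Fintype.card U).factorial / ∏ i, (a i).factorial := by
  have : ∀ i, Nonempty (Fin (a i)) := fun i => ⟨⟨0, ha i⟩⟩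
  let Φ : (U ≃ ∀ i, Fin (a i)) → {π // IsKRectangle a π} :=
    fun e => ⟨coordPartitions e, isKRectangle_coordPartitions ha e⟩
  have hcount := Nat.card_eq_card_mul_of_fiber_equiv Φ fun ⟨π, hπ⟩ => by
    obtain ⟨e₀, rfl⟩ := exists_equiv_coordPartitions_eq hU hπ
    exact ⟨(Equiv.subtypeEquivRight fun e => Subtype.ext_iff).trans
      (nonempty_coordPartitions_fiber_equiv e₀).some⟩
  have hequiv : Nat.card (U ≃ ∀ i, Fin (a i)) = (Fintype.card U).factorial := by
    rw [Nat.card_eq_fintype_card, Fintype.card_equiv (Fintype.equivOfCardEq (by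
      simp only [hU, Fintype.card_pi, Fintype.card_fin]))]
  have hperm : Nat.card (∀ i, Equiv.Perm (Fin (a i))) = ∏ i, (a i).factorial := by
    simp only [Nat.card_eq_fintype_card, Fintype.card_pi, Fintype.card_perm, Fintype.card_fin]
  rw [hequiv, hperm] at hcount
  exact (Nat.div_eq_of_eq_mul_left (by positivity) hcount).symm

/-- The number of `k`-rectangles `(π₁, …, π_k)` on a set of size
`n = a₁ a₂ ⋯ a_k` such that `π_i` has exactly `a_i` blocks is the multinomial
coefficient `n! / (a₁! a₂! ⋯ a_k!)`. -/
theorem card_kRectangles {U : Type} [Fintype U] [DecidableEq U] (k : ℕ)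
    (hk : 1 ≤ k) (a : Fin k → ℕ) (ha : ∀ i, 0 < a i)
    (hU : Fintype.card U = ∏ i, a i) :
    Nat.card {π : Fin k → Finpartition (Finset.univ : Finset U) //
        IsKRectangle a π} =
      (Fintype.card U).factorial / ∏ i, (a i).factorial :=
  card_kRectangles_general k a ha hU
end

section
/- (Cauchy–Frobenius lemma for product groups.) Let M and N be finite groups and suppose the product group M × N acts on a finite set S. The subgroup M = M × {1} acts on S, and each g ∈ N permutes the set of M-orbits of S via the action of (1, g). Then for every g ∈ N, the number of M-orbits O with (1,g)·O = O equals (1/|M|) · ∑_{f ∈ M} fix(f, g), where fix(f, g) is the number of elements s ∈ S with (f, g)·s = s. Equivalently, |M| · #{M-orbits fixed setwise by (1,g)} = ∑_{f ∈ M} #{s ∈ S : (f,g)·s = s}. -/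
/-!
Write `(f, g) • s = f • φ s`, where `φ = ((1, g) • ·)` commutes with the action of `M`.
Count the pairs `(f, s)` with `f • φ s = s` by `s`, orbit by orbit. On an `M`-orbit `O` with
`φ '' O ≠ O` there are none. If `φ '' O = O` and `s₀ ∈ O`, then for each `s ∈ O` the elements
`f` with `f • φ s = s` are as many as those with `f • s₀ = s`, and the latter numbers add up
to `|M|` over `s ∈ O`.
-/

open Finset MulAction

namespace MulActionHom

variable {M S : Type*} [Group M] [MulAction M S]

theorem image_orbit (φ : S →[M] S) (s : S) : φ '' orbit M s = orbit M (φ s) := by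
  ext t
  simp only [Set.mem_image, mem_orbit_iff]
  constructor
  · rintro ⟨_, ⟨m, rfl⟩, rfl⟩
    exact ⟨m, (φ.map_smul m s).symm⟩
  · rintro ⟨m, rfl⟩
    exact ⟨m • s, ⟨m, rfl⟩, φ.map_smul m s⟩

theorem image_orbit_eq_self_iff (φ : S →[M] S) (s : S) :
    φ '' orbit M s = orbit M s ↔ φ s ∈ orbit M s := by
  rw [φ.image_orbit, orbit_eq_iff]

end MulActionHom

namespace MulAction

variable {M S : Type*} [Group M] [MulAction M S]

theorem card_smul_eq_of_orbit_eq {a b c : S} (h : orbit M b = orbit M c) :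
    Nat.card {m : M // m • b = a} = Nat.card {m : M // m • c = a} := by
  obtain ⟨n, hn⟩ := orbit_eq_iff.mp h
  exact Nat.card_congr <| (Equiv.mulRight n).subtypeEquiv fun m => by
    simp only [Equiv.coe_mulRight, mul_smul, hn]

theorem sum_card_smul_eq_card_group [Fintype M] {t : Finset S} (s₀ : S)
    (ht : ∀ m : M, m • s₀ ∈ t) :
    ∑ s ∈ t, Nat.card {m : M // m • s₀ = s} = Fintype.card M := by
  classical
  simp only [Nat.card_eq_fintype_card, Fintype.card_subtype]
  exact (card_eq_sum_card_fiberwise fun m _ => ht m).symm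

theorem sum_card_smul_apply_eq_self_over_orbit [Fintype M] (φ : S →[M] S) {t : Finset S}
    (s₀ : S) (ht : ∀ s, s ∈ t ↔ s ∈ orbit M s₀) :
    ∑ s ∈ t, Nat.card {m : M // m • φ s = s} =
      if φ '' orbit M s₀ = orbit M s₀ then Fintype.card M else 0 := by
  have horbit {s : S} (hs : s ∈ t) : orbit M s = orbit M s₀ := orbit_eq_iff.mpr ((ht s).mp hs)
  split_ifs with hfix
  · rw [← sum_card_smul_eq_card_group s₀ fun m => (ht _).mpr (mem_orbit s₀ m)]
    refine sum_congr rfl fun s hs => card_smul_eq_of_orbit_eq ?_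
    rwa [← φ.image_orbit, horbit hs]
  · refine sum_eq_zero fun s hs => Nat.card_eq_zero.mpr <| .inl ⟨fun ⟨m, hm⟩ => hfix ?_⟩
    rw [← horbit hs, φ.image_orbit_eq_self_iff, mem_orbit_symm]
    exact ⟨m, hm⟩

theorem card_group_mul_card_invariant_orbits [Fintype M] [Fintype S] (φ : S →[M] S) :
    Fintype.card M * Nat.card {O : Set S // (∃ s, O = orbit M s) ∧ φ '' O = O} =
      ∑ m : M, Nat.card {s : S // m • φ s = s} := by
  classical
  set orbits : Finset (Set S) := univ.image (orbit M)
  have hcard : Nat.card {O : Set S // (∃ s, O = orbit M s) ∧ φ '' O = O} =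
      #{O ∈ orbits | φ '' O = O} := by
    rw [← Nat.card_eq_finsetCard]
    exact Nat.card_congr <| Equiv.subtypeEquivRight fun O => by simp [orbits, eq_comm]
  have hcomm : ∑ m : M, Nat.card {s : S // m • φ s = s} =
      ∑ s : S, Nat.card {m : M // m • φ s = s} := by
    simp only [Nat.card_eq_fintype_card, Fintype.card_subtype, card_filter]
    exact sum_comm
  have hfiber : ∀ O ∈ orbits, ∑ s ∈ univ with orbit M s = O, Nat.card {m : M // m • φ s = s} =
      if φ '' O = O then Fintype.card M else 0 := by
    simp only [orbits, mem_image, mem_univ, true_and, forall_exists_index]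
    rintro _ s₀ rfl
    exact sum_card_smul_apply_eq_self_over_orbit φ s₀ fun s => by simp [orbit_eq_iff]
  rw [hcard, hcomm, ← sum_fiberwise_of_maps_to (g := orbit M) (t := orbits)
    fun s _ => mem_image_of_mem _ (mem_univ s), sum_congr rfl hfiber, ← sum_filter, sum_const,
    smul_eq_mul, mul_comm]

end MulAction

theorem cauchy_frobenius_product_group_general {M N S : Type} [Group M] [Group N]
    [Fintype M] [Fintype S] [MulAction (M × N) S] (g : N) :
    Fintype.card M *
        Nat.card {O : Set S //
          (∃ s : S, O = {t | ∃ m : M, ((m, (1 : N)) : M × N) • s = t}) ∧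
          (fun s => (((1 : M), g) : M × N) • s) '' O = O} =
      ∑ f : M, Nat.card {s : S // ((f, g) : M × N) • s = s} := by
  let _ : MulAction M S := MulAction.compHom S (MonoidHom.inl M N)
  have smul_eq (f : M) (s : S) : ((f, g) : M × N) • s = f • (((1 : M), g) : M × N) • s := by
    rw [show ((f, g) : M × N) = (f, 1) * (1, g) by simp, mul_smul]; rfl
  let φ : S →[M] S :=
    { toFun := fun s => (((1 : M), g) : M × N) • s
      map_smul' := fun f s => by
        change (((1 : M), g) : M × N) • f • s = f • (((1 : M), g) : M × N) • s
        rw [← smul_eq, show ((f, g) : M × N) = (1, g) * (f, 1) by simp, mul_smul]; rfl }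
  rw [Fintype.sum_congr _ _ fun f => Nat.card_congr <| Equiv.subtypeEquivRight fun s => by
    rw [smul_eq]]
  exact card_group_mul_card_invariant_orbits φ

/-- **Cauchy–Frobenius lemma for product groups.**  Let a finite product group
`M × N` act on a finite set `S`, and let `g ∈ N`.  Then
`|M| · #{M-orbits fixed setwise by (1, g)} = ∑_{f ∈ M} #{s ∈ S : (f, g) • s = s}`,
where an `M`-orbit is a set of the form `{t | ∃ m : M, (m, 1) • s = t}`. -/
theorem cauchy_frobenius_product_group {M N S : Type} [Group M] [Group N]
    [Fintype M] [Fintype N] [Fintype S] [MulAction (M × N) S] (g : N) :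
    Fintype.card M *
        Nat.card {O : Set S //
          (∃ s : S, O = {t | ∃ m : M, ((m, (1 : N)) : M × N) • s = t}) ∧
          (fun s => (((1 : M), g) : M × N) • s) '' O = O} =
      ∑ f : M, Nat.card {s : S // ((f, g) : M × N) • s = s} :=
  cauchy_frobenius_product_group_general g
end

section
/- Let m ≥ 1, n ≥ 1, let α be the cyclic permutation of Fin m given by α(i) = i + 1 (mod m) (an m-cycle), and let τ : Fin m → Perm(Fin n) be any function. Define the permutation T of the set of functions f : Fin m → Fin n by (T f)(i) = τ(i)( f(α⁻¹ i) ). Then the number of functions f fixed by T equals the number of points of Fin n fixed by the composite permutation τ(m−1) ∘ τ(m−2) ∘ ⋯ ∘ τ(1) ∘ τ(0). -/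
/-!
A function fixed by `T` satisfies `f (i + 1) = τ (i + 1) (f i)` along the cycle, so it is
determined by its value `x = f (m - 1)`: then `f i = (τ i ∘ ⋯ ∘ τ 0) x`, and closing the cycle
at `i = m - 1` says exactly that `x` is fixed by `τ (m - 1) ∘ ⋯ ∘ τ 0`.
-/

namespace Fin

variable {M : Type*} [Monoid M] {n : ℕ}

/-- `revPartialProd f k = f (k - 1) * ⋯ * f 0`, the mirror image of `Fin.partialProd`. -/
def revPartialProd (f : Fin n → M) (k : Fin (n + 1)) : M :=
  ((List.ofFn f).take k).reverse.prod

@[simp]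
theorem revPartialProd_zero (f : Fin n → M) : revPartialProd f 0 = 1 := by
  simp [revPartialProd]

theorem revPartialProd_succ (f : Fin n → M) (j : Fin n) :
    revPartialProd f j.succ = f j * revPartialProd f j.castSucc := by
  simp [revPartialProd, List.take_add_one]

theorem revPartialProd_last (f : Fin n → M) :
    revPartialProd f (last n) = (List.ofFn f).reverse.prod := by
  simp [revPartialProd, List.take_of_length_le]

end Fin

theorem finRotate_inv_zero (m : ℕ) : (finRotate (m + 1))⁻¹ 0 = Fin.last m := by
  rw [Equiv.Perm.inv_eq_iff_eq, finRotate_last]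

theorem finRotate_inv_succ {m : ℕ} (i : Fin m) :
    (finRotate (m + 1))⁻¹ i.succ = i.castSucc := by
  rw [Equiv.Perm.inv_eq_iff_eq]
  exact (finRotate_of_lt i.isLt).symm

section FixedFunctions

variable {α : Type*} {m : ℕ} (τ : Fin (m + 1) → Equiv.Perm α)

theorem forall_apply_finRotate_inv_eq_iff {f : Fin (m + 1) → α} :
    (∀ i, τ i (f ((finRotate (m + 1))⁻¹ i)) = f i) ↔
      τ 0 (f (Fin.last m)) = f 0 ∧ ∀ j : Fin m, τ j.succ (f j.castSucc) = f j.succ := by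
  simp only [Fin.forall_fin_succ, finRotate_inv_zero, finRotate_inv_succ]

theorem eq_revPartialProd_of_forall_apply_finRotate_inv_eq {f : Fin (m + 1) → α}
    (hf : ∀ i, τ i (f ((finRotate (m + 1))⁻¹ i)) = f i) (i : Fin (m + 1)) :
    f i = Fin.revPartialProd τ i.succ (f (Fin.last m)) := by
  obtain ⟨h_zero, h_succ⟩ := (forall_apply_finRotate_inv_eq_iff τ).1 hf
  induction i using Fin.induction with
  | zero =>
    rw [Fin.revPartialProd_succ, Fin.castSucc_zero, Fin.revPartialProd_zero, mul_one, h_zero]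
  | succ j ih =>
    rw [Fin.revPartialProd_succ, ← Fin.succ_castSucc, Equiv.Perm.mul_apply, ← ih, h_succ]

def fixedFunctionsEquivFixedPoints :
    {f : Fin (m + 1) → α // ∀ i, τ i (f ((finRotate (m + 1))⁻¹ i)) = f i} ≃
      {x : α // (List.ofFn τ).reverse.prod x = x} where
  toFun f := ⟨f.1 (Fin.last m), by
    rw [← Fin.revPartialProd_last, ← Fin.succ_last]
    exact (eq_revPartialProd_of_forall_apply_finRotate_inv_eq τ f.2 _).symm⟩
  invFun x := ⟨fun i => Fin.revPartialProd τ i.succ x, by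
    refine (forall_apply_finRotate_inv_eq_iff τ
      (f := fun i => Fin.revPartialProd τ i.succ x)).2 ⟨?_, fun j => ?_⟩
    · rw [Fin.succ_last, Fin.revPartialProd_last, x.2, Fin.revPartialProd_succ, Fin.castSucc_zero,
        Fin.revPartialProd_zero, mul_one]
    · rw [Fin.revPartialProd_succ τ j.succ, Fin.succ_castSucc, Equiv.Perm.mul_apply]⟩
  left_inv f := Subtype.ext <| funext fun i =>
    (eq_revPartialProd_of_forall_apply_finRotate_inv_eq τ f.2 i).symm
  right_inv x := Subtype.ext <| by
    simp only [Fin.succ_last, Fin.revPartialProd_last, x.2]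

end FixedFunctions

theorem card_fixed_functions_eq_card_fixed_points_general (m n : ℕ) (hm : 1 ≤ m)
    (τ : Fin m → Equiv.Perm (Fin n)) :
    Nat.card {f : Fin m → Fin n // ∀ i, τ i (f ((finRotate m)⁻¹ i)) = f i} =
      Nat.card {x : Fin n // (List.ofFn τ).reverse.prod x = x} := by
  obtain ⟨m, rfl⟩ : ∃ k, m = k + 1 := ⟨m - 1, by omega⟩
  exact Nat.card_congr (fixedFunctionsEquivFixedPoints τ)

/-- Let `α` be the `m`-cycle `i ↦ i + 1` of `Fin m` and `τ : Fin m → Perm (Fin n)`.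
The permutation `T` of functions `f : Fin m → Fin n` defined by
`(T f)(i) = τ(i) (f (α⁻¹ i))` has as many fixed points as the composite
permutation `τ(m−1) ∘ τ(m−2) ∘ ⋯ ∘ τ(1) ∘ τ(0)` has fixed points in `Fin n`. -/
theorem card_fixed_functions_eq_card_fixed_points (m n : ℕ) (hm : 1 ≤ m)
    (hn : 1 ≤ n) (τ : Fin m → Equiv.Perm (Fin n)) :
    Nat.card {f : Fin m → Fin n // ∀ i, τ i (f ((finRotate m)⁻¹ i)) = f i} =
      Nat.card {x : Fin n // (List.ofFn τ).reverse.prod x = x} :=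
  card_fixed_functions_eq_card_fixed_points_general m n hm τ
end
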